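/- arXiv:1502.00259 — 9 statements merged into one kernel-verified Lean document; each statement's English description precedes it below -/
import Mathlib

section
/- Let 𝒜 be a unital *-subalgebra of the algebra of d×d complex matrices (d finite) and let M_1, …, M_K be d×d complex matrices. Then ∑_{k=1}^K M_k† A M_k = A holds for every A ∈ 𝒜 if and only if ∑_{k=1}^K M_k† M_k = I and every M_k belongs to the commutant 𝒜′ = { B : AB = BA for all A ∈ 𝒜 }. -/
/-!
Write `Φ X = ∑ₖ Mₖ⋆ X Mₖ`. Expanding the commutators `Cₖ = A Mₖ - Mₖ A` gives the identity
`∑ₖ Cₖ⋆ Cₖ = Φ(A⋆A) - Φ(A⋆) A - A⋆ Φ(A) + A⋆ Φ(1) A`.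
If `Φ` fixes every element of the unital *-algebra `𝒜`, the right-hand side vanishes for `A ∈ 𝒜`,
and a vanishing sum of positive matrices `Cₖ⋆ Cₖ` forces every `Cₖ = 0`.
Conversely, if each `Mₖ` commutes with `A`, then `Φ A = Φ 1 * A = A`.
-/

open Matrix

section KrausMap

variable {R ι : Type*} [Ring R] [StarRing R] [Fintype ι]

def krausMap (M : ι → R) (X : R) : R := ∑ k, star (M k) * X * M k

theorem krausMap_one (M : ι → R) : krausMap M 1 = ∑ k, star (M k) * M k := by
  simp [krausMap]

theorem krausMap_eq_self_of_commute {M : ι → R} {X : R} (hunital : krausMap M 1 = 1)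
    (hcomm : ∀ k, Commute X (M k)) : krausMap M X = X := by
  calc krausMap M X = krausMap M 1 * X := by
        simp only [krausMap, Finset.sum_mul, mul_assoc, (hcomm _).eq, mul_one]
    _ = X := by rw [hunital, one_mul]

theorem sum_star_commutator_mul_self (M : ι → R) (A : R) :
    ∑ k, star (A * M k - M k * A) * (A * M k - M k * A) =
      krausMap M (star A * A) - krausMap M (star A) * A - star A * krausMap M A
        + star A * krausMap M 1 * A := by
  simp only [krausMap, Finset.sum_mul, Finset.mul_sum, ← Finset.sum_sub_distrib,
    ← Finset.sum_add_distrib, star_sub, star_mul]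
  refine Finset.sum_congr rfl fun k _ => ?_
  noncomm_ring

theorem sum_star_commutator_mul_self_eq_zero {M : ι → R} {A : R}
    (hA : krausMap M A = A) (hAstar : krausMap M (star A) = star A)
    (hAstarA : krausMap M (star A * A) = star A * A) (hunital : krausMap M 1 = 1) :
    ∑ k, star (A * M k - M k * A) * (A * M k - M k * A) = 0 := by
  rw [sum_star_commutator_mul_self, hA, hAstar, hAstarA, hunital, mul_one]
  abel

end KrausMap

open scoped MatrixOrder ComplexOrder in
theorem Matrix.sum_conjTranspose_mul_self_eq_zero_iff {𝕜 n ι : Type*} [RCLike 𝕜] [Fintype n]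
    {s : Finset ι} {N : ι → Matrix n n 𝕜} :
    ∑ k ∈ s, (N k)ᴴ * N k = 0 ↔ ∀ k ∈ s, N k = 0 := by
  rw [Finset.sum_eq_zero_iff_of_nonneg fun k _ => (posSemidef_conjTranspose_mul_self (N k)).nonneg]
  simp only [conjTranspose_mul_self_eq_zero]

/-- **Lindblad's lemma.** For a unital *-subalgebra `𝒜` of the `d × d` complex matrices and
matrices `M_1, …, M_K`, one has `∑ k, (M k)ᴴ * A * M k = A` for every `A ∈ 𝒜` if and only if
`∑ k, (M k)ᴴ * M k = 1` and every `M k` lies in the commutant of `𝒜`. -/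
theorem stmt_0 {d K : ℕ}
    (𝒜 : StarSubalgebra ℂ (Matrix (Fin d) (Fin d) ℂ))
    (M : Fin K → Matrix (Fin d) (Fin d) ℂ) :
    (∀ A ∈ 𝒜, ∑ k, (M k)ᴴ * A * M k = A) ↔
      ((∑ k, (M k)ᴴ * M k = 1) ∧ ∀ k, ∀ A ∈ 𝒜, A * M k = M k * A) := by
  have hΦ (X : Matrix (Fin d) (Fin d) ℂ) : ∑ k, (M k)ᴴ * X * M k = krausMap M X := rfl
  have hΦ1 : ∑ k, (M k)ᴴ * M k = krausMap M 1 := (krausMap_one M).symm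
  simp only [hΦ, hΦ1]
  constructor
  · intro hfix
    have hunital := hfix 1 (one_mem 𝒜)
    refine ⟨hunital, fun k A hA => sub_eq_zero.mp ?_⟩
    have hsum := sum_star_commutator_mul_self_eq_zero (hfix A hA) (hfix _ (star_mem hA))
      (hfix _ (mul_mem (star_mem hA) hA)) hunital
    exact sum_conjTranspose_mul_self_eq_zero_iff.mp hsum k (Finset.mem_univ k)
  · rintro ⟨hunital, hcomm⟩ A hA
    exact krausMap_eq_self_of_commute hunital fun k => hcomm k A hA
end

section
/- Let ℳ(ρ) = ∑_{k=1}^K M_k ρ M_k† be a quantum channel (∑_k M_k† M_k = I) on d×d complex matrices and let H be a Hermitian d×d matrix with spectral projections P_E. Then ∑_k M_k† H^n M_k = H^n for every natural number n if and only if Tr[P_E ℳ(ρ)] = Tr[P_E ρ] for every d×d matrix ρ and every eigenvalue E of H. -/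
/-!
Write `ℳ*` for the dual channel `A ↦ ∑ₖ Mₖ† A Mₖ`. As the `P_E` are complete orthogonal
idempotents, `Hⁿ = ∑_E Eⁿ P_E`, so the moment condition reads `∑_E Eⁿ (ℳ*(P_E) - P_E) = 0` for
all `n`; since the eigenvalues are distinct, evaluating against Lagrange basis polynomials shows
this is equivalent to `ℳ*(P_E) = P_E` for every `E`. By cyclicity of the trace,
`Tr[P_E ℳ(ρ)] = Tr[ℳ*(P_E) ρ]`, and a matrix is determined by its traces against all `ρ`.
-/

open Matrix Polynomial

lemma CompleteOrthogonalIdempotents.sum_smul_pow {R A I : Type*} [CommSemiring R] [Semiring A]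
    [Algebra R A] [Fintype I] {e : I → A} (he : CompleteOrthogonalIdempotents e) (c : I → R)
    (n : ℕ) : (∑ i, c i • e i) ^ n = ∑ i, c i ^ n • e i := by
  classical
  induction n with
  | zero => simp [he.complete]
  | succ n ih =>
    simp_rw [pow_succ, ih, Finset.sum_mul, Finset.mul_sum, smul_mul_smul_comm, he.mul_eq,
      smul_ite, smul_zero, Finset.sum_ite_eq, Finset.mem_univ, if_true]

lemma Polynomial.sum_eval_smul_eq {R V I : Type*} [CommSemiring R] [AddCommMonoid V]
    [Module R V] [Fintype I] (p : R[X]) (v : I → R) (D : I → V) :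
    ∑ j, p.eval (v j) • D j =
      ∑ n ∈ Finset.range (p.natDegree + 1), p.coeff n • ∑ j, v j ^ n • D j := by
  simp_rw [eval_eq_sum_range, Finset.sum_smul, Finset.smul_sum, smul_smul]
  exact Finset.sum_comm

lemma Lagrange.sum_eval_basis_smul {K V I : Type*} [Field K] [AddCommMonoid V] [Module K V]
    [Fintype I] [DecidableEq I] {v : I → K} (hv : Function.Injective v) (D : I → V) (i : I) :
    ∑ j, (Lagrange.basis Finset.univ v i).eval (v j) • D j = D i := by
  rw [Finset.sum_eq_single_of_mem i (Finset.mem_univ i)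
      fun j _ hj => by rw [Lagrange.eval_basis_of_ne hj.symm (Finset.mem_univ j), zero_smul],
    Lagrange.eval_basis_self hv.injOn (Finset.mem_univ i), one_smul]

lemma forall_sum_pow_smul_eq_iff {K V I : Type*} [Field K] [AddCommMonoid V] [Module K V]
    [Fintype I] {v : I → K} (hv : Function.Injective v) {D D' : I → V} :
    (∀ n : ℕ, ∑ j, v j ^ n • D j = ∑ j, v j ^ n • D' j) ↔ D = D' := by
  classical
  refine ⟨fun h => funext fun i => ?_, fun h _ => h ▸ rfl⟩
  have key := Polynomial.sum_eval_smul_eq (Lagrange.basis Finset.univ v i) v D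
  simp_rw [h, ← Polynomial.sum_eval_smul_eq, Lagrange.sum_eval_basis_smul hv] at key
  exact key

section KrausDual

variable {n κ R : Type*} [Fintype n] [Fintype κ] [CommSemiring R] [StarRing R]

def krausDual (M : κ → Matrix n n R) : Matrix n n R →ₗ[R] Matrix n n R where
  toFun A := ∑ k, (M k)ᴴ * A * M k
  map_add' A B := by simp [mul_add, add_mul, Finset.sum_add_distrib]
  map_smul' c A := by simp [Finset.smul_sum]

lemma trace_mul_kraus_eq_trace_krausDual_mul (M : κ → Matrix n n R) (A ρ : Matrix n n R) :
    (A * ∑ k, M k * ρ * (M k)ᴴ).trace = (krausDual M A * ρ).trace := by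
  simp only [krausDual, LinearMap.coe_mk, AddHom.coe_mk, Finset.mul_sum, Finset.sum_mul,
    trace_sum]
  refine Finset.sum_congr rfl fun k _ => ?_
  rw [← mul_assoc, trace_mul_comm, mul_assoc, mul_assoc]

end KrausDual

theorem stmt_2_general {d K : ℕ} {ι : Type} [Fintype ι]
    (H : Matrix (Fin d) (Fin d) ℂ)
    (E : ι → ℝ) (hE : Function.Injective E)
    (P : ι → Matrix (Fin d) (Fin d) ℂ)
    (hOrth : ∀ i j, i ≠ j → P i * P j = 0)
    (hSum : ∑ i, P i = 1)
    (hSpec : H = ∑ i, (E i : ℂ) • P i)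
    (M : Fin K → Matrix (Fin d) (Fin d) ℂ) :
    (∀ n : ℕ, ∑ k, (M k)ᴴ * H ^ n * M k = H ^ n) ↔
      (∀ (ρ : Matrix (Fin d) (Fin d) ℂ) (i : ι),
        Matrix.trace (P i * ∑ k, M k * ρ * (M k)ᴴ) = Matrix.trace (P i * ρ)) := by
  have hP : CompleteOrthogonalIdempotents P :=
    CompleteOrthogonalIdempotents.iff_ortho_complete.2 ⟨fun i j hij => hOrth i j hij, hSum⟩
  have hpow (n : ℕ) : H ^ n = ∑ i, (E i : ℂ) ^ n • P i := hSpec ▸ hP.sum_smul_pow _ n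
  have hdual (n : ℕ) : ∑ k, (M k)ᴴ * H ^ n * M k = ∑ i, (E i : ℂ) ^ n • krausDual M (P i) := by
    change krausDual M (H ^ n) = _
    simp only [hpow, map_sum, map_smul]
  calc (∀ n : ℕ, ∑ k, (M k)ᴴ * H ^ n * M k = H ^ n)
      ↔ ∀ n : ℕ, ∑ i, (E i : ℂ) ^ n • krausDual M (P i) = ∑ i, (E i : ℂ) ^ n • P i := by
        simp_rw [hdual, hpow]
    _ ↔ ∀ i, krausDual M (P i) = P i :=
        (forall_sum_pow_smul_eq_iff (Complex.ofReal_injective.comp hE)).trans funext_iff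
    _ ↔ _ := by
        simp_rw [trace_mul_kraus_eq_trace_krausDual_mul, ext_iff_trace_mul_right (A := krausDual M _)]
        exact forall_comm

/-- For a quantum channel `ℳ(ρ) = ∑ k, M k * ρ * (M k)ᴴ` (with `∑ k, (M k)ᴴ * M k = 1`) and a
Hermitian matrix `H` with spectral decomposition `H = ∑ i, E i • P i`, the channel preserves all
moments of `H` (`∑ k, (M k)ᴴ * H ^ n * M k = H ^ n` for all `n`) if and only if it preserves the
energy distribution: `Tr[P i * ℳ(ρ)] = Tr[P i * ρ]` for every state `ρ` and every eigenvalue. -/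
theorem stmt_2 {d K : ℕ} {ι : Type} [Fintype ι] [DecidableEq ι]
    (H : Matrix (Fin d) (Fin d) ℂ) (hH : H.IsHermitian)
    (E : ι → ℝ) (hE : Function.Injective E)
    (P : ι → Matrix (Fin d) (Fin d) ℂ)
    (hHerm : ∀ i, (P i).IsHermitian)
    (hIdem : ∀ i, P i * P i = P i)
    (hOrth : ∀ i j, i ≠ j → P i * P j = 0)
    (hSum : ∑ i, P i = 1)
    (hSpec : H = ∑ i, (E i : ℂ) • P i)
    (M : Fin K → Matrix (Fin d) (Fin d) ℂ)
    (hTP : ∑ k, (M k)ᴴ * M k = 1) :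
    (∀ n : ℕ, ∑ k, (M k)ᴴ * H ^ n * M k = H ^ n) ↔
      (∀ (ρ : Matrix (Fin d) (Fin d) ℂ) (i : ι),
        Matrix.trace (P i * ∑ k, M k * ρ * (M k)ᴴ) = Matrix.trace (P i * ρ)) :=
  stmt_2_general H E hE P hOrth hSum hSpec M
end

section
/- Let H be a Hermitian operator on ℂ^d and let V : ℂ^d → ℂ^d ⊗ ℂ^K be an isometry (V†V = I) satisfying the intertwining relation V H = (H ⊗ I_K) V. Then for every unit vector φ₀ ∈ ℂ^K there exists a unitary U on ℂ^d ⊗ ℂ^K such that U(ψ ⊗ φ₀) = Vψ for every ψ ∈ ℂ^d and U (H ⊗ I_K) = (H ⊗ I_K) U. -/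
/-!
Put `M = H ⊗ I_K` and let `A ψ = ψ ⊗ φ₀`. Both `A` and `V` are isometries intertwining `H` with
`M`, so `Z = V A†` is a partial isometry commuting with `M` with initial projection `A A†`, and any
unitary `U` commuting with `M` with `U A A† = Z` satisfies `U A = V`. To find `U`, diagonalise `M`:
in its eigenbasis, commuting with `M` means being block diagonal along the eigenvalues, and `Z`
extends to a unitary block by block, because in finite dimensions an isometry from the initial
space of a partial isometry onto its final space extends to the orthogonal complements, which have
equal dimension.
-/

open Matrix
open scoped InnerProductSpace Kronecker

theorem CStarRing.mul_star_mul_self_of_isIdempotentElem {A : Type*} [NonUnitalNormedRing A]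
    [StarRing A] [CStarRing A] {a : A} (h : IsIdempotentElem (star a * a)) :
    a * (star a * a) = a := by
  -- with `p = star a * a`: `star (a * p - a) * (a * p - a) = p ^ 3 - 2 * p ^ 2 + p = 0`
  rw [← sub_eq_zero, ← CStarRing.star_mul_self_eq_zero_iff]
  have hp : star a * a * (star a * a) = star a * a := h
  simp only [star_sub, star_mul, star_star, sub_mul, mul_sub, mul_assoc]
  simp only [← mul_assoc (star a) a, hp]
  abel

namespace ContinuousLinearMap

variable {𝕜 E : Type*} [RCLike 𝕜] [NormedAddCommGroup E] [InnerProductSpace 𝕜 E]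
  [CompleteSpace E] [FiniteDimensional 𝕜 E]

theorem exists_star_mul_self_eq_one_mul_eq (f : E →L[𝕜] E)
    (hf : IsIdempotentElem (star f * f)) :
    ∃ u : E →L[𝕜] E, star u * u = 1 ∧ u * (star f * f) = f := by
  set P := star f * f
  have hP : ∀ x, P (P x) = P x := fun x => congr($hf x)
  have hfP : ∀ x y, ⟪f x, f y⟫_𝕜 = ⟪x, P y⟫_𝕜 := fun x y => by
    rw [← adjoint_inner_right, ← star_eq_adjoint]; rfl
  let L : LinearMap.range (P : E →ₗ[𝕜] E) →ₗᵢ[𝕜] E :=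
    (f.toLinearMap.domRestrict _).isometryOfInner (by
      rintro ⟨_, x, rfl⟩ ⟨_, y, rfl⟩
      simp [hfP, hP])
  refine ⟨L.extend.toContinuousLinearMap, ?_, ?_⟩
  · exact (norm_map_iff_adjoint_comp_self _).mp L.extend.norm_map
  · ext x
    refine (L.extend_apply ⟨P x, x, rfl⟩).trans ?_
    exact congr($(CStarRing.mul_star_mul_self_of_isIdempotentElem hf) x)

end ContinuousLinearMap

namespace Matrix

section BlockDiagonal

variable {ι β α : Type*}

def IsBlockDiagonal [Zero α] (μ : ι → β) (X : Matrix ι ι α) : Prop :=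
  ∀ i j, μ i ≠ μ j → X i j = 0

namespace IsBlockDiagonal

variable {μ : ι → β}

theorem one [DecidableEq ι] [Zero α] [One α] : IsBlockDiagonal μ (1 : Matrix ι ι α) :=
  fun _ _ h => one_apply_ne (ne_of_apply_ne μ h)

theorem conjTranspose [AddMonoid α] [StarAddMonoid α] {X : Matrix ι ι α}
    (hX : IsBlockDiagonal μ X) : IsBlockDiagonal μ Xᴴ :=
  fun i j h => by rw [conjTranspose_apply, hX j i (Ne.symm h), star_zero]

theorem mul [Fintype ι] [NonUnitalNonAssocSemiring α] {X Y : Matrix ι ι α}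
    (hX : IsBlockDiagonal μ X) (hY : IsBlockDiagonal μ Y) : IsBlockDiagonal μ (X * Y) := by
  intro i j h
  refine Finset.sum_eq_zero fun k _ => show X i k * Y k j = 0 from ?_
  by_cases hik : μ i = μ k
  · rw [hY k j (hik ▸ h), mul_zero]
  · rw [hX i k hik, zero_mul]

theorem ext [Zero α] [DecidableEq β] {X Y : Matrix ι ι α} (hX : IsBlockDiagonal μ X)
    (hY : IsBlockDiagonal μ Y) (h : ∀ c, X.toSquareBlock μ c = Y.toSquareBlock μ c) : X = Y := by
  ext i j
  by_cases hij : μ i = μ j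
  · exact congr_fun₂ (h (μ j)) ⟨i, hij⟩ ⟨j, rfl⟩
  · rw [hX i j hij, hY i j hij]

theorem toSquareBlock_mul [Fintype ι] [DecidableEq β] [NonUnitalNonAssocSemiring α]
    {Y : Matrix ι ι α} (hY : IsBlockDiagonal μ Y) (X : Matrix ι ι α) (c : β) :
    (X * Y).toSquareBlock μ c = X.toSquareBlock μ c * Y.toSquareBlock μ c := by
  ext ⟨i, hi⟩ ⟨j, hj⟩
  simp only [toSquareBlock_def, of_apply, mul_apply]
  have hout : ∑ k : {k // μ k ≠ c}, X i k * Y k j = 0 :=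
    Fintype.sum_eq_zero _ fun k => by rw [hY k j (hj ▸ k.2), mul_zero]
  rw [← Fintype.sum_subtype_add_sum_subtype (fun k => μ k = c), hout, add_zero]

end IsBlockDiagonal

theorem toSquareBlock_one [DecidableEq ι] [Zero α] [One α] (μ : ι → β) (c : β) :
    (1 : Matrix ι ι α).toSquareBlock μ c = 1 :=
  submatrix_one_embedding (Function.Embedding.subtype _)

theorem toSquareBlock_conjTranspose [Star α] (X : Matrix ι ι α) (μ : ι → β) (c : β) :
    Xᴴ.toSquareBlock μ c = (X.toSquareBlock μ c)ᴴ :=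
  rfl

def ofSquareBlocks [Zero α] [DecidableEq β] (μ : ι → β)
    (u : ∀ c, Matrix {i // μ i = c} {i // μ i = c} α) : Matrix ι ι α :=
  of fun i j => if h : μ j = μ i then u (μ i) ⟨i, rfl⟩ ⟨j, h⟩ else 0

theorem isBlockDiagonal_ofSquareBlocks [Zero α] [DecidableEq β] (μ : ι → β)
    (u : ∀ c, Matrix {i // μ i = c} {i // μ i = c} α) :
    IsBlockDiagonal μ (ofSquareBlocks μ u) :=
  fun _ _ h => by simp [ofSquareBlocks, Ne.symm h]

theorem toSquareBlock_ofSquareBlocks [Zero α] [DecidableEq β] (μ : ι → β)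
    (u : ∀ c, Matrix {i // μ i = c} {i // μ i = c} α) (c : β) :
    (ofSquareBlocks μ u).toSquareBlock μ c = u c := by
  ext ⟨i, rfl⟩ ⟨j, hj⟩
  simp [ofSquareBlocks, toSquareBlock_def, hj]

theorem commute_diagonal_iff_isBlockDiagonal [Fintype ι] [DecidableEq ι] [CommRing α]
    [NoZeroDivisors α] (d : ι → α) (X : Matrix ι ι α) :
    Commute (diagonal d) X ↔ IsBlockDiagonal d X := by
  rw [commute_iff_eq, ← Matrix.ext_iff]
  refine forall₂_congr fun i j => ?_
  rw [diagonal_mul, mul_diagonal, ← sub_eq_zero, mul_comm, ← mul_sub, mul_eq_zero, sub_eq_zero,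
    or_comm, or_iff_not_imp_left]

end BlockDiagonal

section TensorRight

variable {ι κ α : Type*} [DecidableEq ι] [CommSemiring α]

def tensorRight (φ : κ → α) : Matrix (ι × κ) ι α :=
  of fun p j => (1 : Matrix ι ι α) p.1 j * φ p.2

theorem tensorRight_mulVec [Fintype ι] (φ : κ → α) (ψ : ι → α) :
    tensorRight φ *ᵥ ψ = fun p => ψ p.1 * φ p.2 := by
  ext p
  simp [tensorRight, mulVec, dotProduct, one_apply, mul_comm]

theorem conjTranspose_tensorRight_mul_self [Fintype ι] [Fintype κ] [StarRing α] {φ : κ → α}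
    (hφ : star φ ⬝ᵥ φ = 1) :
    (tensorRight (ι := ι) φ)ᴴ * tensorRight (ι := ι) φ = 1 := by
  ext i j
  rw [mul_apply]
  by_cases h : i = j
  · subst h
    simpa [tensorRight, Fintype.sum_prod_type, one_apply, dotProduct] using hφ
  · simp [tensorRight, Fintype.sum_prod_type, one_apply, h, Ne.symm h]

theorem kronecker_one_mul_tensorRight [Fintype ι] [Fintype κ] [DecidableEq κ] (H : Matrix ι ι α)
    (φ : κ → α) :
    (H ⊗ₖ (1 : Matrix κ κ α)) * (tensorRight φ : Matrix (ι × κ) ι α) =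
      (tensorRight φ : Matrix (ι × κ) ι α) * H := by
  ext ⟨i, k⟩ j
  rw [mul_apply, mul_apply]
  simp [tensorRight, Fintype.sum_prod_type, one_apply, mul_comm]

end TensorRight

variable {𝕜 n : Type*} [RCLike 𝕜] [Fintype n] [DecidableEq n]

theorem exists_mem_unitaryGroup_mul_eq (Z : Matrix n n 𝕜) (hZ : IsIdempotentElem (Zᴴ * Z)) :
    ∃ U ∈ unitaryGroup n 𝕜, U * (Zᴴ * Z) = Z := by
  rw [← star_eq_conjTranspose] at hZ ⊢
  let φ := toEuclideanCLM (n := n) (𝕜 := 𝕜)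
  obtain ⟨u, hu, huZ⟩ := (φ Z).exists_star_mul_self_eq_one_mul_eq
    (by simpa only [map_mul, map_star] using hZ.map φ)
  refine ⟨φ.symm u, mem_unitaryGroup_iff'.mpr (EquivLike.injective φ ?_), EquivLike.injective φ ?_⟩
  · rw [map_mul φ, map_star φ, φ.apply_symm_apply, hu, map_one φ]
  · rw [map_mul φ, map_mul φ, map_star φ, φ.apply_symm_apply, huZ]

theorem IsBlockDiagonal.exists_mem_unitaryGroup_mul_eq {β : Type*} [DecidableEq β]
    {μ : n → β} {Z : Matrix n n 𝕜} (hZ : IsBlockDiagonal μ Z)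
    (hZZ : IsIdempotentElem (Zᴴ * Z)) :
    ∃ U ∈ unitaryGroup n 𝕜, IsBlockDiagonal μ U ∧ U * (Zᴴ * Z) = Z := by
  have hblock (c : β) :
      (Zᴴ * Z).toSquareBlock μ c = (Z.toSquareBlock μ c)ᴴ * Z.toSquareBlock μ c := by
    rw [hZ.toSquareBlock_mul, toSquareBlock_conjTranspose]
  have hZZblk := hZ.conjTranspose.mul hZ
  choose u hu huZ using fun c => Matrix.exists_mem_unitaryGroup_mul_eq (Z.toSquareBlock μ c) (by
    rw [IsIdempotentElem, ← hblock, ← hZZblk.toSquareBlock_mul, hZZ.eq])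
  have hU := isBlockDiagonal_ofSquareBlocks μ u
  refine ⟨ofSquareBlocks μ u, mem_unitaryGroup_iff'.mpr ?_, hU, ?_⟩
  · refine hU.conjTranspose.mul hU |>.ext .one fun c => ?_
    rw [hU.toSquareBlock_mul, toSquareBlock_conjTranspose, toSquareBlock_ofSquareBlocks,
      ← star_eq_conjTranspose, mem_unitaryGroup_iff'.mp (hu c), toSquareBlock_one]
  · refine hU.mul hZZblk |>.ext hZ fun c => ?_
    rw [hZZblk.toSquareBlock_mul, toSquareBlock_ofSquareBlocks, hblock, huZ]

theorem IsHermitian.exists_mem_unitaryGroup_commute_mul_eq {M Z : Matrix n n 𝕜}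
    (hM : M.IsHermitian) (hZM : Commute Z M) (hZ : IsIdempotentElem (Zᴴ * Z)) :
    ∃ U ∈ unitaryGroup n 𝕜, Commute U M ∧ U * (Zᴴ * Z) = Z := by
  set φ := Unitary.conjStarAlgAut 𝕜 _ hM.eigenvectorUnitary
  set μ : n → 𝕜 := RCLike.ofReal ∘ hM.eigenvalues
  have hMD : M = φ (diagonal μ) := hM.spectral_theorem
  have hZblk : IsBlockDiagonal μ (φ.symm Z) := by
    rw [← commute_diagonal_iff_isBlockDiagonal, ← φ.symm_apply_apply (diagonal μ), ← hMD]
    exact (hZM.map φ.symm).symm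
  obtain ⟨U, hU, hUblk, hUZ⟩ := hZblk.exists_mem_unitaryGroup_mul_eq (by
    simpa only [← star_eq_conjTranspose, map_mul, map_star] using hZ.map φ.symm)
  refine ⟨φ U, Unitary.map_mem φ hU, ?_, ?_⟩
  · rw [hMD]
    exact (((commute_diagonal_iff_isBlockDiagonal μ U).mpr hUblk).map φ).symm
  · rw [← star_eq_conjTranspose] at hUZ ⊢
    rw [← φ.apply_symm_apply Z, ← map_star, ← map_mul, ← map_mul, hUZ]

theorem IsHermitian.exists_mem_unitaryGroup_commute_mul_eq_of_intertwining {κ : Type*}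
    [Fintype κ] [DecidableEq κ] {M : Matrix n n 𝕜} {H : Matrix κ κ 𝕜} (hM : M.IsHermitian)
    (hH : H.IsHermitian) {A V : Matrix n κ 𝕜} (hA : Aᴴ * A = 1) (hV : Vᴴ * V = 1)
    (hMA : M * A = A * H) (hMV : M * V = V * H) :
    ∃ U ∈ unitaryGroup n 𝕜, Commute U M ∧ U * A = V := by
  have hAM : Aᴴ * M = H * Aᴴ := by
    simpa only [conjTranspose_mul, hM.eq, hH.eq] using congr(($hMA)ᴴ)
  have hZM : Commute (V * Aᴴ) M := by
    rw [commute_iff_eq, Matrix.mul_assoc, hAM, ← Matrix.mul_assoc, ← hMV, Matrix.mul_assoc]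
  have hZZ : (V * Aᴴ)ᴴ * (V * Aᴴ) = A * Aᴴ := by
    rw [conjTranspose_mul, conjTranspose_conjTranspose, Matrix.mul_assoc, ← Matrix.mul_assoc Vᴴ,
      hV, Matrix.one_mul]
  obtain ⟨U, hU, hUM, hUZ⟩ := hM.exists_mem_unitaryGroup_commute_mul_eq hZM (by
    rw [hZZ, IsIdempotentElem, Matrix.mul_assoc, ← Matrix.mul_assoc Aᴴ, hA, Matrix.one_mul])
  refine ⟨U, hU, hUM, ?_⟩
  calc U * A = U * (A * Aᴴ) * A := by
        rw [Matrix.mul_assoc, Matrix.mul_assoc, hA, Matrix.mul_one]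
    _ = V := by rw [← hZZ, hUZ, Matrix.mul_assoc, hA, Matrix.mul_one]

end Matrix

/-- Every isometry `V : ℂ^d → ℂ^d ⊗ ℂ^K` intertwining a Hermitian `H` with `H ⊗ I_K` extends,
for any unit vector `φ₀ ∈ ℂ^K`, to a unitary `U` on `ℂ^d ⊗ ℂ^K` with `U (ψ ⊗ φ₀) = V ψ` for all
`ψ` and `U (H ⊗ I_K) = (H ⊗ I_K) U`. -/
theorem stmt_3 {d K : ℕ}
    (H : Matrix (Fin d) (Fin d) ℂ) (hH : H.IsHermitian)
    (V : Matrix (Fin d × Fin K) (Fin d) ℂ)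
    (hIso : Vᴴ * V = 1)
    (hInt : V * H = (H ⊗ₖ (1 : Matrix (Fin K) (Fin K) ℂ)) * V)
    (φ₀ : Fin K → ℂ) (hφ₀ : star φ₀ ⬝ᵥ φ₀ = 1) :
    ∃ U : Matrix (Fin d × Fin K) (Fin d × Fin K) ℂ,
      Uᴴ * U = 1 ∧ U * Uᴴ = 1 ∧
      (∀ ψ : Fin d → ℂ, U *ᵥ (fun p => ψ p.1 * φ₀ p.2) = V *ᵥ ψ) ∧
      U * (H ⊗ₖ (1 : Matrix (Fin K) (Fin K) ℂ)) =
        (H ⊗ₖ (1 : Matrix (Fin K) (Fin K) ℂ)) * U := by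
  have hM : (H ⊗ₖ (1 : Matrix (Fin K) (Fin K) ℂ)).IsHermitian := by
    rw [IsHermitian, conjTranspose_kronecker, hH.eq, conjTranspose_one]
  obtain ⟨U, hU, hUM, hUA⟩ := hM.exists_mem_unitaryGroup_commute_mul_eq_of_intertwining hH
    (conjTranspose_tensorRight_mul_self hφ₀) hIso (kronecker_one_mul_tensorRight H φ₀) hInt.symm
  refine ⟨U, mem_unitaryGroup_iff'.mp hU, mem_unitaryGroup_iff.mp hU, fun ψ => ?_, hUM⟩
  rw [← tensorRight_mulVec, mulVec_mulVec, hUA]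
end

section
/- Let ℳ(ρ) = ∑_{k=1}^K M_k ρ M_k† be an energy-preserving quantum channel on d×d complex matrices, i.e. ∑_k M_k† M_k = I and M_k H = H M_k for every k, where H is a Hermitian d×d matrix. Then there exist a finite-dimensional environment ℂ^K, a unit vector φ₀ ∈ ℂ^K, and a unitary U on ℂ^d ⊗ ℂ^K satisfying U (H ⊗ I_K) = (H ⊗ I_K) U, such that for every d×d matrix ρ one has Tr₂[ U (ρ ⊗ |φ₀⟩⟨φ₀|) U† ] = ℳ(ρ). -/
/-!
Stack the Kraus operators into the isometry `V : ψ ↦ ∑ k, M k ψ ⊗ |k⟩` from `ℂ^d` into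
`ℂ^d ⊗ ℂ^K`; trace preservation is `Vᴴ V = 1`. Halmos' block matrix
`[[1 - V Vᴴ, V], [-Vᴴ, 0]]` on `(ℂ^d ⊗ ℂ^K) ⊕ ℂ^d` is then unitary, because `1 - V Vᴴ` is the
projection complementary to `V Vᴴ`. Identifying that space with `ℂ^d ⊗ ℂ^(K+1)`, the extra summand
becomes the environment level `φ₀ = |K⟩`, whose column of blocks is `(M 0, …, M (K-1), 0)`, so
tracing out the environment reproduces the channel. Since `V H = (H ⊗ 1) V` and `H` is Hermitian,
every block intertwines the Hamiltonians, hence `U` commutes with `H ⊗ 1`.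
-/

open Matrix
open scoped Kronecker

/-- The partial trace over the second tensor factor:
`(Tr₂ X) i j = ∑ a, X (i,a) (j,a)`. -/
noncomputable def ptrace2 {d K : ℕ} (X : Matrix (Fin d × Fin K) (Fin d × Fin K) ℂ) :
    Matrix (Fin d) (Fin d) ℂ :=
  Matrix.of fun i j => ∑ a : Fin K, X (i, a) (j, a)

namespace Matrix

section IsometryDilation

variable {m n α : Type*} [Fintype m] [Fintype n] [DecidableEq m] [DecidableEq n]
  [Ring α] [StarRing α] {V : Matrix m n α}

def isometryDilation (V : Matrix m n α) : Matrix (m ⊕ n) (m ⊕ n) α :=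
  fromBlocks (1 - V * Vᴴ) V (-Vᴴ) 0

theorem isometryDilation_conjTranspose_mul_self (hV : Vᴴ * V = 1) :
    (isometryDilation V)ᴴ * isometryDilation V = 1 := by
  have hVV : V * Vᴴ * V = V := by rw [Matrix.mul_assoc, hV, Matrix.mul_one]
  rw [isometryDilation, fromBlocks_conjTranspose, fromBlocks_multiply, ← fromBlocks_one]
  congr 1
  all_goals simp [Matrix.mul_sub, Matrix.sub_mul, hVV, ← Matrix.mul_assoc, hV]

theorem isometryDilation_mul_conjTranspose_self (hV : Vᴴ * V = 1) :
    isometryDilation V * (isometryDilation V)ᴴ = 1 := by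
  have hVV : V * Vᴴ * V = V := by rw [Matrix.mul_assoc, hV, Matrix.mul_one]
  rw [isometryDilation, fromBlocks_conjTranspose, fromBlocks_multiply, ← fromBlocks_one]
  congr 1
  all_goals simp [Matrix.mul_sub, Matrix.sub_mul, hVV, ← Matrix.mul_assoc, hV]

theorem isometryDilation_commute {A : Matrix n n α} {B : Matrix m m α}
    (hA : V * A = B * V) (hB : Vᴴ * B = A * Vᴴ) :
    isometryDilation V * fromBlocks B 0 0 A = fromBlocks B 0 0 A * isometryDilation V := by
  rw [isometryDilation, fromBlocks_multiply, fromBlocks_multiply]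
  congr 1
  all_goals simp [Matrix.mul_sub, Matrix.sub_mul, hA, hB, Matrix.mul_assoc]
  rw [← Matrix.mul_assoc, hA, Matrix.mul_assoc]

end IsometryDilation

section KrausIsometry

variable {n ι R : Type*} [Fintype n] [Fintype ι] [Semiring R]

def krausIsometry (M : ι → Matrix n n R) : Matrix (n × ι) n R :=
  of fun p j => M p.2 p.1 j

theorem conjTranspose_krausIsometry_mul_self [StarRing R] (M : ι → Matrix n n R) :
    (krausIsometry M)ᴴ * krausIsometry M = ∑ k, (M k)ᴴ * M k := by
  ext i j
  simp [krausIsometry, mul_apply, Matrix.sum_apply, Fintype.sum_prod_type,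
    Finset.sum_comm (γ := n)]

theorem krausIsometry_mul_eq_kronecker_mul [DecidableEq ι] {M : ι → Matrix n n R}
    {H : Matrix n n R} (hComm : ∀ k, M k * H = H * M k) :
    krausIsometry M * H = (H ⊗ₖ (1 : Matrix ι ι R)) * krausIsometry M := by
  ext ⟨i, k⟩ j
  simpa [krausIsometry, mul_apply, Fintype.sum_prod_type, one_apply] using
    congr_fun (congr_fun (hComm k) i) j

end KrausIsometry

end Matrix

section Environment

variable {d K : ℕ}

def envBlock (U : Matrix (Fin d × Fin K) (Fin d × Fin K) ℂ) (a c : Fin K) :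
    Matrix (Fin d) (Fin d) ℂ :=
  of fun i j => U (i, a) (j, c)

theorem ptrace2_mul_kronecker_single_mul_conjTranspose
    (U : Matrix (Fin d × Fin K) (Fin d × Fin K) ℂ) (ρ : Matrix (Fin d) (Fin d) ℂ) (c : Fin K) :
    ptrace2 (U * (ρ ⊗ₖ vecMulVec (Pi.single c 1) (star (Pi.single c 1))) * Uᴴ) =
      ∑ a, envBlock U a c * ρ * (envBlock U a c)ᴴ := by
  ext i j
  simp [ptrace2, envBlock, mul_apply, Matrix.sum_apply, Fintype.sum_prod_type, vecMulVec_apply,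
    Pi.single_apply, Finset.mul_sum, Finset.sum_mul, mul_assoc]
  exact Finset.sum_congr rfl fun _ _ => Finset.sum_comm

def finSuccProdEquiv (d K : ℕ) : Fin d × Fin (K + 1) ≃ (Fin d × Fin K) ⊕ Fin d :=
  ((Equiv.refl _).prodCongr finSumFinEquiv.symm).trans
    ((Equiv.prodSumDistrib _ _ _).trans ((Equiv.refl _).sumCongr (Equiv.prodUnique _ _)))

@[simp] theorem finSuccProdEquiv_castSucc (i : Fin d) (k : Fin K) :
    finSuccProdEquiv d K (i, k.castSucc) = .inl (i, k) := by
  simp [finSuccProdEquiv]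

@[simp] theorem finSuccProdEquiv_last (i : Fin d) :
    finSuccProdEquiv d K (i, Fin.last K) = .inr i := by
  simp [finSuccProdEquiv]

theorem fromBlocks_kronecker_one_submatrix_finSuccProdEquiv {R : Type*} [Semiring R]
    (H : Matrix (Fin d) (Fin d) R) :
    (fromBlocks (H ⊗ₖ (1 : Matrix (Fin K) (Fin K) R)) 0 0 H).submatrix
        (finSuccProdEquiv d K) (finSuccProdEquiv d K) =
      H ⊗ₖ (1 : Matrix (Fin (K + 1)) (Fin (K + 1)) R) := by
  ext ⟨i, a⟩ ⟨j, b⟩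
  induction a using Fin.lastCases <;> induction b using Fin.lastCases <;>
    simp [one_apply, Fin.castSucc_ne_last, (Fin.castSucc_ne_last _).symm]

end Environment

/-- Every energy-preserving channel `ℳ(ρ) = ∑ k, M k * ρ * (M k)ᴴ` (Kraus operators commuting
with the Hermitian Hamiltonian `H`, `∑ k, (M k)ᴴ * M k = 1`) admits a Stinespring dilation by an
environment `ℂ^K'` in a pure state `φ₀` and a unitary `U` commuting with `H ⊗ I`:
`Tr₂[U (ρ ⊗ |φ₀⟩⟨φ₀|) Uᴴ] = ℳ(ρ)` for every `ρ`. -/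
theorem stmt_4 {d K : ℕ}
    (H : Matrix (Fin d) (Fin d) ℂ) (hH : H.IsHermitian)
    (M : Fin K → Matrix (Fin d) (Fin d) ℂ)
    (hTP : ∑ k, (M k)ᴴ * M k = 1)
    (hComm : ∀ k, M k * H = H * M k) :
    ∃ (K' : ℕ) (φ₀ : Fin K' → ℂ), star φ₀ ⬝ᵥ φ₀ = 1 ∧
      ∃ U : Matrix (Fin d × Fin K') (Fin d × Fin K') ℂ,
        Uᴴ * U = 1 ∧ U * Uᴴ = 1 ∧
        U * (H ⊗ₖ (1 : Matrix (Fin K') (Fin K') ℂ)) =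
          (H ⊗ₖ (1 : Matrix (Fin K') (Fin K') ℂ)) * U ∧
        ∀ ρ : Matrix (Fin d) (Fin d) ℂ,
          ptrace2 (U * (ρ ⊗ₖ vecMulVec φ₀ (star φ₀)) * Uᴴ) = ∑ k, M k * ρ * (M k)ᴴ := by
  set V := krausIsometry M
  set e := finSuccProdEquiv d K
  set U := (isometryDilation V).submatrix e e
  have hV : Vᴴ * V = 1 := (conjTranspose_krausIsometry_mul_self M).trans hTP
  have hVH : V * H = (H ⊗ₖ (1 : Matrix (Fin K) (Fin K) ℂ)) * V :=
    krausIsometry_mul_eq_kronecker_mul hComm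
  have hVadjH : Vᴴ * (H ⊗ₖ (1 : Matrix (Fin K) (Fin K) ℂ)) = H * Vᴴ := by
    simpa [conjTranspose_kronecker, hH.eq] using (congrArg conjTranspose hVH).symm
  refine ⟨K + 1, Pi.single (Fin.last K) 1, by simp, U, ?_, ?_, ?_, fun ρ => ?_⟩
  · rw [conjTranspose_submatrix, submatrix_mul_equiv,
      isometryDilation_conjTranspose_mul_self hV, submatrix_one_equiv]
  · rw [conjTranspose_submatrix, submatrix_mul_equiv,
      isometryDilation_mul_conjTranspose_self hV, submatrix_one_equiv]
  · rw [← fromBlocks_kronecker_one_submatrix_finSuccProdEquiv, submatrix_mul_equiv,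
      submatrix_mul_equiv, isometryDilation_commute hVH hVadjH]
  · have hlast : envBlock U (Fin.last K) (Fin.last K) = 0 := by
      ext; simp [U, e, envBlock, isometryDilation]
    have hcast (k : Fin K) : envBlock U k.castSucc (Fin.last K) = M k := by
      ext; simp [U, e, envBlock, isometryDilation, V, krausIsometry]
    rw [ptrace2_mul_kronecker_single_mul_conjTranspose, Fin.sum_univ_castSucc]
    simp [hlast, hcast]
end

section
/- Let X be a finite set and, for each x ∈ X, let {M_{x,k}}_{k=1}^{m_x} be d×d complex matrices such that every M_{x,k} commutes with a fixed Hermitian d×d matrix H and ∑_{x∈X} ∑_{k=1}^{m_x} M_{x,k}† M_{x,k} = I. Set K = ∑_{x} m_x. Then there exist an orthonormal basis {φ_{x,k}} of ℂ^K indexed by the pairs (x,k), a distinguished pair (x₀,k₀), and a unitary U on ℂ^d ⊗ ℂ^K with U (H ⊗ I_K) = (H ⊗ I_K) U, such that U(ψ ⊗ φ_{x₀,k₀}) = ∑_{x,k} (M_{x,k} ψ) ⊗ φ_{x,k} for every ψ ∈ ℂ^d; consequently, setting Q_x = ∑_{k=1}^{m_x} |φ_{x,k}⟩⟨φ_{x,k}|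 (orthogonal projections with ∑_x Q_x = I_K), one has Tr₂[ (I ⊗ Q_x) U (ρ ⊗ |φ_{x₀,k₀}⟩⟨φ_{x₀,k₀}|) U† ] = ∑_{k=1}^{m_x} M_{x,k} ρ M_{x,k}† for every x ∈ X and every d×d matrix ρ. -/
/-!
Diagonalize `H = W D Wᴴ`. In the eigenbasis the Kraus operators vanish between different
eigenvalues, so the Stinespring isometry `ψ ↦ ∑ₛ Nₛ ψ ⊗ eₛ`, viewed as the columns `(j, s₀)` of a
matrix on `ℂ^d ⊗ ℂ^S`, only connects indices `(i, s), (j, t)` with equal eigenvalue of `i` and `j`.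
Extending these orthonormal columns to an orthonormal basis separately inside each eigenvalue block
gives a block-diagonal unitary, i.e. one commuting with `D ⊗ 1`; conjugating back by `W ⊗ 1` gives
`U`. With `φ` the standard basis, both identities are then computations with the blocks
`⟨s| U |s₀⟩ = Mₛ` of `U`.
-/

open Matrix
open scoped Kronecker

/-- The partial trace over the second tensor factor:
`(Tr₂ X) i j = ∑ a, X (i,a) (j,a)`. -/
noncomputable def ptrace2' {d : ℕ} {ι : Type*} [Fintype ι]
    (X : Matrix (Fin d × ι) (Fin d × ι) ℂ) : Matrix (Fin d) (Fin d) ℂ :=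
  Matrix.of fun i j => ∑ a : ι, X (i, a) (j, a)

namespace Matrix

theorem commute_diagonal_iff {κ R : Type*} [Fintype κ] [DecidableEq κ] [CommRing R]
    [NoZeroDivisors R] {U : Matrix κ κ R} {g : κ → R} :
    Commute U (diagonal g) ↔ ∀ k k', g k ≠ g k' → U k k' = 0 := by
  simp only [Commute, SemiconjBy, ← Matrix.ext_iff, mul_diagonal, diagonal_mul]
  refine forall₂_congr fun k k' => ?_
  rw [mul_comm, ← sub_eq_zero, ← sub_mul, mul_eq_zero, sub_eq_zero, eq_comm (a := g k')]
  tauto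

section Isometry

variable {κ τ : Type*} [Fintype κ] [DecidableEq τ]

theorem exists_unitary_submatrix_eq [DecidableEq κ] {e : τ → κ} (he : e.Injective)
    {V : Matrix κ τ ℂ} (hV : Vᴴ * V = 1) : ∃ U ∈ unitaryGroup κ ℂ, U.submatrix id e = V := by
  let col : τ → EuclideanSpace ℂ κ := fun t => WithLp.toLp 2 (fun k => V k t)
  have hcol : Orthonormal ℂ col := by
    rw [orthonormal_iff_ite]
    intro t t'
    rw [← one_apply, ← hV, mul_apply, EuclideanSpace.inner_toLp_toLp, dotProduct]
    simp [mul_comm]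
  classical
  let v : κ → EuclideanSpace ℂ κ := fun k =>
    if h : k ∈ Set.range e then col ((Equiv.ofInjective e he).symm ⟨k, h⟩) else 0
  have hv : (Set.range e).domRestrict v = col ∘ (Equiv.ofInjective e he).symm := by
    ext ⟨k, hk⟩ : 1
    exact dif_pos hk
  obtain ⟨b, hb⟩ :=
    (hv ▸ hcol.comp _ (Equiv.injective _)).exists_orthonormalBasis_extension_of_card_eq (by simp)
  refine ⟨(EuclideanSpace.basisFun κ ℂ).toBasis.toMatrix b,
    (EuclideanSpace.basisFun κ ℂ).toMatrix_orthonormalBasis_mem_unitary b, ?_⟩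
  ext k t
  simp [Module.Basis.toMatrix_apply, hb (e t) ⟨t, rfl⟩, v, col]

theorem conjTranspose_mul_self_submatrix_subtype {V : Matrix κ τ ℂ} (hV : Vᴴ * V = 1)
    {p : κ → Prop} [DecidablePred p] {q : τ → Prop} (hVpq : ∀ k t, q t → ¬p k → V k t = 0) :
    (V.submatrix (Subtype.val : {k // p k} → κ) (Subtype.val : {t // q t} → τ))ᴴ *
      V.submatrix (Subtype.val : {k // p k} → κ) (Subtype.val : {t // q t} → τ) = 1 := by
  classical
  ext t t'
  have hsupp : ∀ k, star (V k t) * V k t' ≠ 0 → p k := fun k hk => by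
    by_contra hpk
    rw [hVpq k t t.2 hpk, star_zero, zero_mul] at hk
    exact hk rfl
  calc ∑ k : {k // p k}, star (V k t) * V k t'
      = (Vᴴ * V) t t' := by
        rw [← Finset.subtype_univ,
          Finset.sum_subtype_eq_sum_filter (fun k => star (V k t) * V k t'),
          Finset.sum_filter_of_ne fun k _ => hsupp k]
        rfl
    _ = (1 : Matrix {t // q t} {t // q t} ℂ) t t' := by
        simp [hV, one_apply, Subtype.ext_iff]

theorem exists_unitary_submatrix_eq_of_fiberwise [DecidableEq κ] {β : Type*} (ℓ : κ → β) {e : τ → κ}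
    (he : e.Injective) {V : Matrix κ τ ℂ} (hV : Vᴴ * V = 1)
    (hVℓ : ∀ k t, ℓ k ≠ ℓ (e t) → V k t = 0) :
    ∃ U ∈ unitaryGroup κ ℂ, (∀ k k', ℓ k ≠ ℓ k' → U k k' = 0) ∧ U.submatrix id e = V := by
  classical
  let c : κ → Set.range ℓ := Set.rangeFactorization ℓ
  have hc : ∀ {k k'}, c k = c k' ↔ ℓ k = ℓ k' := Subtype.ext_iff
  have hfiber : ∀ b, ∃ U ∈ unitaryGroup {k // c k = b} ℂ,
      U.submatrix id (fun t : {t // c (e t) = b} => ⟨e t, t.2⟩) =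
        V.submatrix Subtype.val Subtype.val := fun b =>
    exists_unitary_submatrix_eq (fun t t' h => Subtype.ext (he (congrArg Subtype.val h)))
      (conjTranspose_mul_self_submatrix_subtype hV fun k t ht hk =>
        hVℓ k t (mt hc.2 fun h => hk (h.trans ht)))
  choose U hU hUV using hfiber
  let σ := Equiv.sigmaFiberEquiv c
  have hσ : ∀ b (k k' : {k // c k = b}),
      (blockDiagonal' U).submatrix σ.symm σ.symm k k' = U b k k' := by
    intro b k k'
    simp only [submatrix_apply, show σ.symm k = ⟨b, k⟩ from σ.symm_apply_eq.2 rfl,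
      show σ.symm k' = ⟨b, k'⟩ from σ.symm_apply_eq.2 rfl, blockDiagonal'_apply_eq]
  refine ⟨(blockDiagonal' U).submatrix σ.symm σ.symm, ?_, fun k k' h => ?_, ?_⟩
  · have hUU : ∀ b, (U b)ᴴ * U b = 1 := fun b => (hU b).1
    rw [mem_unitaryGroup_iff', star_eq_conjTranspose, conjTranspose_submatrix,
      submatrix_mul_equiv, blockDiagonal'_conjTranspose, ← blockDiagonal'_mul]
    simp only [hUU]
    rw [← Pi.one_def, blockDiagonal'_one, submatrix_one_equiv]
  · exact blockDiagonal'_apply_ne U _ _ (mt hc.1 h)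
  · ext k t
    by_cases h : c k = c (e t)
    · rw [submatrix_apply, id, hσ _ ⟨k, h⟩ ⟨e t, rfl⟩]
      exact congrFun (congrFun (hUV _) ⟨k, h⟩) ⟨t, rfl⟩
    · exact (blockDiagonal'_apply_ne U _ _ h).trans (hVℓ k t (mt hc.2 h)).symm

end Isometry

section Block

variable {l m n o p q r α : Type*}

/-- The operator `⟨k| Z |k'⟩` on the first tensor factor. -/
def block (Z : Matrix (m × o) (n × p) α) (k : o) (k' : p) : Matrix m n α :=
  of fun i j => Z (i, k) (j, k')

@[simp]
theorem block_apply (Z : Matrix (m × o) (n × p) α) (k : o) (k' : p) (i : m) (j : n) :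
    Z.block k k' i j = Z (i, k) (j, k') :=
  rfl

theorem block_conjTranspose [Star α] (Z : Matrix (m × o) (n × p) α) (k : p) (k' : o) :
    Zᴴ.block k k' = (Z.block k' k)ᴴ :=
  rfl

theorem block_kronecker_one_mul_mul_kronecker_one [Semiring α] [Fintype m] [Fintype n]
    [Fintype o] [DecidableEq o] (A : Matrix l m α) (Z : Matrix (m × o) (n × o) α)
    (B : Matrix n q α) (k k' : o) :
    ((A ⊗ₖ (1 : Matrix o o α)) * Z * (B ⊗ₖ (1 : Matrix o o α))).block k k' =
      A * Z.block k k' * B := by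
  ext i j
  simp [mul_apply, Fintype.sum_prod_type, one_apply, Finset.sum_mul]

theorem block_mul_kronecker_single_mul [Semiring α] [Fintype m] [Fintype n] [Fintype o]
    [Fintype p] [DecidableEq o] [DecidableEq p] (A : Matrix (l × r) (m × o) α) (ρ : Matrix m n α)
    (B : Matrix (n × p) (q × r) α) (a : o) (b : p) (k k' : r) :
    (A * (ρ ⊗ₖ single a b 1) * B).block k k' = A.block k a * ρ * B.block b k' := by
  ext i j
  simp [mul_apply, Fintype.sum_prod_type, single_apply, Finset.sum_mul, ite_and,
    Finset.sum_ite_irrel]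

theorem mulVec_kronecker_single_one [Semiring α] [Fintype n] [Fintype o] [DecidableEq o]
    (U : Matrix (m × p) (n × o) α) (ψ : n → α) (a : o) :
    U *ᵥ (fun q => ψ q.1 * (Pi.single a 1 : o → α) q.2) = fun q => (U.block q.2 a *ᵥ ψ) q.1 := by
  ext ⟨i, k⟩
  simp [mulVec, dotProduct, Fintype.sum_prod_type, Pi.single_apply]

end Block

end Matrix

theorem ptrace2'_one_kronecker_sum_single_mul {d : ℕ} {ι κ : Type*} [Fintype ι] [DecidableEq ι]
    (s : Finset κ) (a : κ → ι) (Z : Matrix (Fin d × ι) (Fin d × ι) ℂ) :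
    ptrace2' ((1 ⊗ₖ ∑ k ∈ s, single (a k) (a k) 1) * Z) = ∑ k ∈ s, Z.block (a k) (a k) := by
  ext i j
  simp only [ptrace2', of_apply, mul_apply, kroneckerMap_apply, one_apply, Matrix.sum_apply,
    single_apply, ite_and, ite_mul, one_mul, zero_mul, Finset.sum_mul, Fintype.sum_prod_type,
    Finset.sum_ite_irrel, Finset.sum_const_zero, Finset.sum_ite_eq, Finset.mem_univ, if_true]
  simp only [Finset.sum_comm (t := s)]
  simp [Finset.sum_ite_irrel]

theorem exists_unitary_dilation_of_commute_diagonal {ι S : Type*} [Fintype ι] [DecidableEq ι]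
    [Fintype S] [DecidableEq S] (d : ι → ℂ) (N : S → Matrix ι ι ℂ)
    (hN : ∀ s, Commute (N s) (diagonal d)) (hTP : ∑ s, (N s)ᴴ * N s = 1) (s₀ : S) :
    ∃ U ∈ unitaryGroup (ι × S) ℂ,
      Commute U (diagonal d ⊗ₖ (1 : Matrix S S ℂ)) ∧ ∀ s, U.block s s₀ = N s := by
  let V : Matrix (ι × S) ι ℂ := of fun q j => N q.2 q.1 j
  have hV : Vᴴ * V = 1 := by
    rw [← hTP]
    ext i j
    simp [V, mul_apply, Fintype.sum_prod_type, Matrix.sum_apply, Finset.sum_comm (γ := ι)]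
  obtain ⟨U, hU, hUd, hUV⟩ := exists_unitary_submatrix_eq_of_fiberwise (fun q : ι × S => d q.1)
    (e := fun j => (j, s₀)) (fun j j' h => congrArg Prod.fst h) hV
    fun q j h => commute_diagonal_iff.1 (hN q.2) q.1 j h
  refine ⟨U, hU, ?_, fun s => ?_⟩
  · rw [← diagonal_one, diagonal_kronecker_diagonal]
    simpa only [mul_one] using commute_diagonal_iff.2 hUd
  · ext i j
    exact congrFun (congrFun hUV (i, s)) j

theorem exists_unitary_dilation {ι S : Type*} [Fintype ι] [DecidableEq ι] [Fintype S]
    [DecidableEq S] {H : Matrix ι ι ℂ} (hH : H.IsHermitian) (N : S → Matrix ι ι ℂ)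
    (hN : ∀ s, Commute (N s) H) (hTP : ∑ s, (N s)ᴴ * N s = 1) (s₀ : S) :
    ∃ U ∈ unitaryGroup (ι × S) ℂ,
      Commute U (H ⊗ₖ (1 : Matrix S S ℂ)) ∧ ∀ s, U.block s s₀ = N s := by
  let w := hH.eigenvectorUnitary
  let conj := Unitary.conjStarAlgAut ℂ (Matrix ι ι ℂ)
  have hD := hH.conjStarAlgAut_star_eigenvectorUnitary
  obtain ⟨U₀, hU₀, hU₀D, hU₀N⟩ := exists_unitary_dilation_of_commute_diagonal _
    (fun s => conj (star w) (N s)) (fun s => hD ▸ (hN s).map _)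
    (by
      rw [← map_one (conj (star w)), ← hTP, map_sum]
      simp only [map_mul, ← star_eq_conjTranspose, map_star]) s₀
  let A : unitary (Matrix (ι × S) (ι × S) ℂ) :=
    ⟨(w : Matrix ι ι ℂ) ⊗ₖ 1, kronecker_mem_unitary w.2 (one_mem _)⟩
  have hH1 : H ⊗ₖ (1 : Matrix S S ℂ) =
      Unitary.conjStarAlgAut ℂ _ A (diagonal (RCLike.ofReal ∘ hH.eigenvalues) ⊗ₖ 1) := by
    conv_lhs => rw [hH.spectral_theorem]
    simp [A, w, star_eq_conjTranspose, conjTranspose_kronecker, ← mul_kronecker_mul]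
  refine ⟨Unitary.conjStarAlgAut ℂ _ A U₀, ?_, hH1 ▸ hU₀D.map _, fun s => ?_⟩
  · rw [Unitary.conjStarAlgAut_apply]
    exact mul_mem (mul_mem A.2 hU₀) (star A).2
  · have hU : Unitary.conjStarAlgAut ℂ _ A U₀ =
        ((w : Matrix ι ι ℂ) ⊗ₖ 1) * U₀ * (star (w : Matrix ι ι ℂ) ⊗ₖ 1) := by
      simp [A, star_eq_conjTranspose, conjTranspose_kronecker]
    rw [hU, block_kronecker_one_mul_mul_kronecker_one, hU₀N]
    change conj w (conj (star w) (N s)) = N s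
    rw [← Unitary.conjStarAlgAut_mul_apply, Unitary.mul_star_self, map_one]
    rfl

/-- Every energy-preserving quantum instrument `{ℳ_x}` with Kraus operators `M x k`
(commuting with the Hermitian `H`, and with `∑ x k, (M x k)ᴴ * M x k = 1`) admits a dilation by
an environment of dimension `K = ∑ x, m x` (indexed by the pairs `(x,k)`): there are an
orthonormal basis `φ`, a distinguished pair `s₀`, and a unitary `U` commuting with `H ⊗ I`, with
`U (ψ ⊗ φ s₀) = ∑ (x,k), (M x k ψ) ⊗ φ (x,k)`; consequently, with `Q x = ∑ k, |φ (x,k)⟩⟨φ (x,k)|`,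
`Tr₂[(I ⊗ Q x) U (ρ ⊗ |φ s₀⟩⟨φ s₀|) Uᴴ] = ∑ k, M x k * ρ * (M x k)ᴴ` for all `x` and `ρ`. -/
theorem stmt_5 {d : ℕ} (hd : 0 < d) {X : Type} [Fintype X] [DecidableEq X]
    (m : X → ℕ)
    (H : Matrix (Fin d) (Fin d) ℂ) (hH : H.IsHermitian)
    (M : (x : X) → Fin (m x) → Matrix (Fin d) (Fin d) ℂ)
    (hComm : ∀ x k, M x k * H = H * M x k)
    (hTP : ∑ x : X, ∑ k : Fin (m x), (M x k)ᴴ * M x k = 1) :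
    ∃ φ : ((x : X) × Fin (m x)) → (((x : X) × Fin (m x)) → ℂ),
      (∀ s t, star (φ s) ⬝ᵥ φ t = if s = t then 1 else 0) ∧
      ∃ s₀ : (x : X) × Fin (m x),
        ∃ U : Matrix (Fin d × ((x : X) × Fin (m x))) (Fin d × ((x : X) × Fin (m x))) ℂ,
          Uᴴ * U = 1 ∧ U * Uᴴ = 1 ∧
          U * (H ⊗ₖ (1 : Matrix ((x : X) × Fin (m x)) ((x : X) × Fin (m x)) ℂ)) =
            (H ⊗ₖ (1 : Matrix ((x : X) × Fin (m x)) ((x : X) × Fin (m x)) ℂ)) * U ∧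
          (∀ ψ : Fin d → ℂ,
            U *ᵥ (fun p => ψ p.1 * φ s₀ p.2) =
              ∑ s : (x : X) × Fin (m x), fun p => (M s.1 s.2 *ᵥ ψ) p.1 * φ s p.2) ∧
          (∀ (x : X) (ρ : Matrix (Fin d) (Fin d) ℂ),
            ptrace2' (((1 : Matrix (Fin d) (Fin d) ℂ) ⊗ₖ
                (∑ k : Fin (m x), vecMulVec (φ ⟨x, k⟩) (star (φ ⟨x, k⟩)))) *
                (U * (ρ ⊗ₖ vecMulVec (φ s₀) (star (φ s₀))) * Uᴴ)) =
              ∑ k : Fin (m x), M x k * ρ * (M x k)ᴴ) := by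
  have hTP' : ∑ s : (x : X) × Fin (m x), (M s.1 s.2)ᴴ * M s.1 s.2 = 1 := by
    rw [Fintype.sum_sigma]
    exact hTP
  have : NeZero d := ⟨hd.ne'⟩
  obtain ⟨s₀, -⟩ := Finset.nonempty_of_sum_ne_zero (hTP' ▸ one_ne_zero)
  obtain ⟨U, hU, hUH, hUM⟩ := exists_unitary_dilation hH (fun s : (x : X) × Fin (m x) => M s.1 s.2)
    (fun s => hComm s.1 s.2) hTP' s₀
  refine ⟨fun s => Pi.single s 1, fun s t => ?_, s₀, U, hU.1, hU.2, hUH.eq, fun ψ => ?_,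
    fun x ρ => ?_⟩
  · simp [Pi.single_apply, eq_comm]
  · rw [mulVec_kronecker_single_one]
    ext ⟨i, s⟩
    simp [Finset.sum_apply, Pi.single_apply, hUM]
  · simp only [Pi.star_single, star_one, ← single_eq_single_vecMulVec_single,
      ptrace2'_one_kronecker_sum_single_mul, block_mul_kronecker_single_mul, block_conjTranspose,
      hUM]
end

section
/- Let H_in be a Hermitian d_in×d_in matrix and H_out a Hermitian d_out×d_out matrix, and let ℳ(ρ) = ∑_{k=1}^K M_k ρ M_k† (with M_k of size d_out×d_in and ∑_k M_k† M_k ≤ I) be covariant, meaning ℳ( e^{-itH_in} ρ e^{itH_in} ) = e^{-itH_out} ℳ(ρ) e^{itH_out} for every t ∈ ℝ and every d_in×d_in matrix ρ. Then P := ∑_k M_k† M_k commutes with H_in. If moreover P is invertible, there exists a quantum channel 𝒞(ρ) = ∑_j C_j ρ C_j† (with ∑_j C_j† C_j = I) that is also covariant in the same sense and satisfies ℳ(ρ) = 𝒞( √P ρ √P ) for every ρ, where √P is the positive square root of P. -/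
open Matrix
open scoped ComplexOrder

noncomputable def timeEvo {n : ℕ} (t : ℝ) (H : Matrix (Fin n) (Fin n) ℂ) :
    Matrix (Fin n) (Fin n) ℂ :=
  NormedSpace.exp ((-(Complex.I * (t : ℂ))) • H)

/-!
Pairing the covariance identity with the trace shows that the dual map `X ↦ ∑ (M k)ᴴ X (M k)` is
covariant too; at `X = 1` this says that `P` is invariant under conjugation by `U t = e^{-itHin}`,
and differentiating `P U t = U t P` at `t = 0` gives `P Hin = Hin P`. The square root `S` of `P`
is a continuous function of `P`, so `S` and `S⁻¹` commute with every `U t`. Hence the Kraus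
operators `M k S⁻¹` are covariant, trace preserving because
`∑ (M k S⁻¹)ᴴ (M k S⁻¹) = S⁻¹ P S⁻¹ = 1`, and give back `ℳ` after the filter `ρ ↦ S ρ S`.
-/

section TimeEvolution

attribute [local instance] Matrix.linftyOpNormedRing Matrix.linftyOpNormedAlgebra

variable {n : ℕ}

theorem timeEvo_eq_exp_smul (t : ℝ) (H : Matrix (Fin n) (Fin n) ℂ) :
    timeEvo t H = NormedSpace.exp (t • (-Complex.I) • H) := by
  rw [timeEvo, ← Complex.coe_smul, smul_smul]
  congr 2
  ring

theorem timeEvo_mul_timeEvo_neg (t : ℝ) (H : Matrix (Fin n) (Fin n) ℂ) :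
    timeEvo t H * timeEvo (-t) H = 1 := by
  rw [timeEvo_eq_exp_smul, timeEvo_eq_exp_smul,
    ← Matrix.exp_add_of_commute _ _ ((Commute.refl _).smul_left _ |>.smul_right _), ← add_smul,
    add_neg_cancel, zero_smul, NormedSpace.exp_zero]

theorem hasDerivAt_timeEvo_zero (H : Matrix (Fin n) (Fin n) ℂ) :
    HasDerivAt (fun t : ℝ => timeEvo t H) ((-Complex.I) • H) 0 := by
  simp_rw [timeEvo_eq_exp_smul]
  have := hasDerivAt_exp_smul_const (𝕂 := ℝ) ((-Complex.I) • H) 0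
  rw [zero_smul, NormedSpace.exp_zero, one_mul] at this
  exact this

theorem commute_of_forall_commute_timeEvo {P H : Matrix (Fin n) (Fin n) ℂ}
    (h : ∀ t : ℝ, Commute P (timeEvo t H)) : Commute P H := by
  have hleft := (hasDerivAt_timeEvo_zero H).const_mul P
  have hright := (hasDerivAt_timeEvo_zero H).mul_const P
  simp_rw [← (h _).eq] at hright
  have := hleft.unique hright
  rw [mul_smul_comm, smul_mul_assoc] at this
  exact smul_right_injective _ (neg_ne_zero.2 Complex.I_ne_zero) this

end TimeEvolution

section Kraus

variable {ι m n R : Type*} [Fintype ι] [Fintype m] [Fintype n] [CommSemiring R] [StarRing R]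

theorem Matrix.trace_sum_mul_mul_conjTranspose (M : ι → Matrix m n R) (ρ : Matrix n n R) :
    (∑ k, M k * ρ * (M k)ᴴ).trace = ((∑ k, (M k)ᴴ * M k) * ρ).trace := by
  simp only [trace_sum, Finset.sum_mul]
  exact Finset.sum_congr rfl fun k _ => trace_mul_cycle _ _ _

variable [DecidableEq m] [DecidableEq n]

theorem commute_sum_conjTranspose_mul_of_covariant (M : ι → Matrix m n R)
    {U U' : Matrix n n R} {V V' : Matrix m m R} (hU : U * U' = 1) (hV : V' * V = 1)
    (hcov : ∀ ρ, ∑ k, M k * (U * ρ * U') * (M k)ᴴ = V * (∑ k, M k * ρ * (M k)ᴴ) * V') :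
    Commute (∑ k, (M k)ᴴ * M k) U := by
  set P := ∑ k, (M k)ᴴ * M k
  have hconj : U' * P * U = P := by
    refine ext_iff_trace_mul_right.2 fun ρ => ?_
    calc (U' * P * U * ρ).trace = (P * (U * ρ * U')).trace := by
          simp only [mul_assoc]
          rw [trace_mul_comm]
          simp only [mul_assoc]
      _ = (V * (∑ k, M k * ρ * (M k)ᴴ) * V').trace := by
          rw [← trace_sum_mul_mul_conjTranspose, hcov]
      _ = (P * ρ).trace := by
          rw [trace_mul_cycle, hV, one_mul, trace_sum_mul_mul_conjTranspose]
  calc P * U = U * (U' * P * U) := by rw [← mul_assoc, ← mul_assoc, hU, one_mul]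
    _ = U * P := by rw [hconj]

end Kraus

section Commute

variable {n 𝕜 : Type*} [Fintype n] [DecidableEq n] [RCLike 𝕜]

open scoped Matrix.Norms.L2Operator MatrixOrder in
theorem Matrix.PosSemidef.commute_of_mul_self_eq {S P U : Matrix n n 𝕜} (hS : S.PosSemidef)
    (hSP : S * S = P) (h : Commute P U) : Commute S U := by
  rw [← CFC.sqrt_unique hSP hS.nonneg]
  exact h.cfcₙ_nnreal _

theorem Matrix.commute_nonsing_inv_left {S U : Matrix n n 𝕜} (hS : IsUnit S) (h : Commute S U) :
    Commute S⁻¹ U := by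
  simpa [Matrix.coe_units_inv] using h.units_inv_left (u := hS.unit)

end Commute

section Normalization

variable {ι m n R : Type*} [Fintype ι] [Fintype n] [DecidableEq n] [CommRing R] [StarRing R]
  {M : ι → Matrix m n R} {S : Matrix n n R}

theorem sum_conjTranspose_mul_of_mul_nonsing_inv [Fintype m] (hS : S.IsHermitian)
    (hSu : IsUnit S) (hSP : S * S = ∑ k, (M k)ᴴ * M k) :
    ∑ k, (M k * S⁻¹)ᴴ * (M k * S⁻¹) = 1 := by
  have hdet := (isUnit_iff_isUnit_det S).1 hSu
  calc ∑ k, (M k * S⁻¹)ᴴ * (M k * S⁻¹) = S⁻¹ * (S * S) * S⁻¹ := by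
        simp only [conjTranspose_mul, hS.inv.eq, hSP, Finset.mul_sum, Finset.sum_mul,
          Matrix.mul_assoc]
    _ = 1 := by rw [← mul_assoc, nonsing_inv_mul _ hdet, one_mul, mul_nonsing_inv _ hdet]

theorem sum_mul_mul_conjTranspose_eq_mul_nonsing_inv (hS : S.IsHermitian) (hSu : IsUnit S)
    (ρ : Matrix n n R) :
    ∑ k, M k * ρ * (M k)ᴴ = ∑ k, (M k * S⁻¹) * (S * ρ * S) * (M k * S⁻¹)ᴴ := by
  have hdet := (isUnit_iff_isUnit_det S).1 hSu
  refine Finset.sum_congr rfl fun k _ => ?_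
  simp only [conjTranspose_mul, hS.inv.eq, Matrix.mul_assoc, nonsing_inv_mul_cancel_left _ _ hdet,
    mul_nonsing_inv_cancel_left _ _ hdet]

end Normalization

section Covariance

variable {ι : Type*} [Fintype ι] {din dout : ℕ} {Hin : Matrix (Fin din) (Fin din) ℂ}
  {Hout : Matrix (Fin dout) (Fin dout) ℂ} {M : ι → Matrix (Fin dout) (Fin din) ℂ}

def IsCovariant (Hin : Matrix (Fin din) (Fin din) ℂ) (Hout : Matrix (Fin dout) (Fin dout) ℂ)
    (M : ι → Matrix (Fin dout) (Fin din) ℂ) : Prop :=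
  ∀ (t : ℝ) (ρ : Matrix (Fin din) (Fin din) ℂ),
    ∑ k, M k * (timeEvo t Hin * ρ * timeEvo (-t) Hin) * (M k)ᴴ =
      timeEvo t Hout * (∑ k, M k * ρ * (M k)ᴴ) * timeEvo (-t) Hout

theorem IsCovariant.commute_timeEvo (h : IsCovariant Hin Hout M) (t : ℝ) :
    Commute (∑ k, (M k)ᴴ * M k) (timeEvo t Hin) :=
  commute_sum_conjTranspose_mul_of_covariant M (timeEvo_mul_timeEvo_neg t Hin)
    (by simpa using timeEvo_mul_timeEvo_neg (-t) Hout) (h t)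

theorem IsCovariant.mul_right (h : IsCovariant Hin Hout M) {A : Matrix (Fin din) (Fin din) ℂ}
    (hA : A.IsHermitian) (hAU : ∀ t : ℝ, Commute A (timeEvo t Hin)) :
    IsCovariant Hin Hout (fun k => M k * A) := by
  intro t ρ
  have hconj : ∀ k X, M k * A * X * (M k * A)ᴴ = M k * (A * X * A) * (M k)ᴴ := fun k X => by
    simp only [conjTranspose_mul, hA.eq, Matrix.mul_assoc]
  have hswap : A * (timeEvo t Hin * ρ * timeEvo (-t) Hin) * A =
      timeEvo t Hin * (A * ρ * A) * timeEvo (-t) Hin := by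
    simp only [← mul_assoc, (hAU t).eq]
    simp only [mul_assoc, (hAU (-t)).eq]
  simp only [hconj, hswap]
  exact h t (A * ρ * A)

end Covariance

theorem stmt_6_general {din dout K : ℕ}
    (Hin : Matrix (Fin din) (Fin din) ℂ)
    (Hout : Matrix (Fin dout) (Fin dout) ℂ)
    (M : Fin K → Matrix (Fin dout) (Fin din) ℂ)
    (hcov : ∀ (t : ℝ) (ρ : Matrix (Fin din) (Fin din) ℂ),
      ∑ k, M k * (timeEvo t Hin * ρ * timeEvo (-t) Hin) * (M k)ᴴ =
        timeEvo t Hout * (∑ k, M k * ρ * (M k)ᴴ) * timeEvo (-t) Hout) :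
    (∑ k, (M k)ᴴ * M k) * Hin = Hin * (∑ k, (M k)ᴴ * M k) ∧
    (IsUnit (∑ k, (M k)ᴴ * M k) →
      ∀ S : Matrix (Fin din) (Fin din) ℂ, S.PosSemidef →
        S * S = ∑ k, (M k)ᴴ * M k →
        ∃ (J : ℕ) (C : Fin J → Matrix (Fin dout) (Fin din) ℂ),
          (∑ j, (C j)ᴴ * C j = 1) ∧
          (∀ (t : ℝ) (ρ : Matrix (Fin din) (Fin din) ℂ),
            ∑ j, C j * (timeEvo t Hin * ρ * timeEvo (-t) Hin) * (C j)ᴴ =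
              timeEvo t Hout * (∑ j, C j * ρ * (C j)ᴴ) * timeEvo (-t) Hout) ∧
          (∀ ρ : Matrix (Fin din) (Fin din) ℂ,
            ∑ k, M k * ρ * (M k)ᴴ = ∑ j, C j * (S * ρ * S) * (C j)ᴴ)) := by
  have hcov : IsCovariant Hin Hout M := hcov
  refine ⟨commute_of_forall_commute_timeEvo hcov.commute_timeEvo, fun hP S hS hSP => ?_⟩
  have hSu : IsUnit S := isUnit_of_mul_isUnit_left (hSP ▸ hP)
  have hSU (t : ℝ) : Commute S⁻¹ (timeEvo t Hin) :=
    commute_nonsing_inv_left hSu (hS.commute_of_mul_self_eq hSP (hcov.commute_timeEvo t))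
  have hSh := hS.isHermitian
  exact ⟨K, fun k => M k * S⁻¹, sum_conjTranspose_mul_of_mul_nonsing_inv hSh hSu hSP,
    hcov.mul_right hSh.inv hSU, sum_mul_mul_conjTranspose_eq_mul_nonsing_inv hSh hSu⟩

/-- A covariant quantum operation `ℳ(ρ) = ∑ k, M k ρ (M k)ᴴ` (with `∑ k, (M k)ᴴ M k ≤ 1`,
and `ℳ(e^{-itH_in} ρ e^{itH_in}) = e^{-itH_out} ℳ(ρ) e^{itH_out}` for all `t`) has
`P = ∑ k, (M k)ᴴ M k` commuting with `H_in`; and if `P` is invertible then `ℳ` factors as a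
covariant quantum *channel* `𝒞` applied after the Lüders filter `ρ ↦ √P ρ √P`. -/
theorem stmt_6 {din dout K : ℕ}
    (Hin : Matrix (Fin din) (Fin din) ℂ) (hHin : Hin.IsHermitian)
    (Hout : Matrix (Fin dout) (Fin dout) ℂ) (hHout : Hout.IsHermitian)
    (M : Fin K → Matrix (Fin dout) (Fin din) ℂ)
    (hsub : ((1 : Matrix (Fin din) (Fin din) ℂ) - ∑ k, (M k)ᴴ * M k).PosSemidef)
    (hcov : ∀ (t : ℝ) (ρ : Matrix (Fin din) (Fin din) ℂ),
      ∑ k, M k * (timeEvo t Hin * ρ * timeEvo (-t) Hin) * (M k)ᴴ =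
        timeEvo t Hout * (∑ k, M k * ρ * (M k)ᴴ) * timeEvo (-t) Hout) :
    (∑ k, (M k)ᴴ * M k) * Hin = Hin * (∑ k, (M k)ᴴ * M k) ∧
    (IsUnit (∑ k, (M k)ᴴ * M k) →
      ∀ S : Matrix (Fin din) (Fin din) ℂ, S.PosSemidef →
        S * S = ∑ k, (M k)ᴴ * M k →
        ∃ (J : ℕ) (C : Fin J → Matrix (Fin dout) (Fin din) ℂ),
          (∑ j, (C j)ᴴ * C j = 1) ∧
          (∀ (t : ℝ) (ρ : Matrix (Fin din) (Fin din) ℂ),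
            ∑ j, C j * (timeEvo t Hin * ρ * timeEvo (-t) Hin) * (C j)ᴴ =
              timeEvo t Hout * (∑ j, C j * ρ * (C j)ᴴ) * timeEvo (-t) Hout) ∧
          (∀ ρ : Matrix (Fin din) (Fin din) ℂ,
            ∑ k, M k * ρ * (M k)ᴴ = ∑ j, C j * (S * ρ * S) * (C j)ᴴ)) :=
  stmt_6_general Hin Hout M hcov
end

section
/- Let H be a Hermitian d×d matrix and let ℳ(ρ) = ∑_{k=1}^K M_k ρ M_k† be a quantum operation (∑_k M_k† M_k ≤ I) whose Kraus operators all commute with H. Set P = ∑_k M_k† M_k. Then P (hence also √P) commutes with H, and if P is invertible there exists a quantum channel 𝒞(ρ) = ∑_j C_j ρ C_j† (with ∑_j C_j† C_j = I) whose Kraus operators C_j all commute with H, such that ℳ(ρ) = 𝒞( √P ρ √P ) for every d×d matrix ρ. -/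
/-!
Since `H` is Hermitian, a Kraus operator commuting with `H` has an adjoint commuting with `H`,
so `P = ∑ Mₖᴴ Mₖ` commutes with `H`. A positive semidefinite square root `S` of `P` equals
`CFC.sqrt P`, a continuous function of `P`, hence commutes with everything `P` commutes with.
When `P` is invertible so is `S`, and `Cₖ = Mₖ S⁻¹` works:
`∑ Cₖᴴ Cₖ = S⁻¹ P S⁻¹ = 1` and `Cₖ (S ρ S) Cₖᴴ = Mₖ ρ Mₖᴴ`.
-/

open Matrix
open scoped ComplexOrder MatrixOrder

section Monoid

variable {R : Type*} [Monoid R] [StarMul R]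

theorem IsSelfAdjoint.units_inv {S : Rˣ} (hS : IsSelfAdjoint (S : R)) :
    IsSelfAdjoint (↑S⁻¹ : R) := by
  have hSu : star S = S := Units.ext (by rw [Units.coe_star, hS.star_eq])
  rw [IsSelfAdjoint, ← Units.coe_star_inv, hSu]

theorem mul_mul_star_eq_mul_units_inv_conj (M ρ : R) {S : Rˣ} (hS : IsSelfAdjoint (S : R)) :
    M * ρ * star M = M * ↑S⁻¹ * (S * ρ * S) * star (M * ↑S⁻¹) := by
  simp only [star_mul, hS.units_inv.star_eq, mul_assoc, Units.inv_mul_cancel_left]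
  rw [Units.mul_inv_cancel_left]

end Monoid

section Semiring

variable {R ι : Type*} [Semiring R] [StarRing R] [Fintype ι]

theorem Commute.sum_star_mul_self {M : ι → R} {H : R} (hH : IsSelfAdjoint H)
    (hM : ∀ k, Commute (M k) H) : Commute (∑ k, star (M k) * M k) H :=
  Commute.sum_left _ _ _ fun k _ => by
    have hMk : Commute (star (M k)) H := by simpa only [hH.star_eq] using (hM k).star_star
    exact hMk.mul_left (hM k)

theorem sum_star_mul_self_mul_units_inv {M : ι → R} {S : Rˣ} (hS : IsSelfAdjoint (S : R))
    (hSP : (S : R) * S = ∑ k, star (M k) * M k) :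
    ∑ k, star (M k * ↑S⁻¹) * (M k * ↑S⁻¹) = 1 := by
  calc ∑ k, star (M k * ↑S⁻¹) * (M k * ↑S⁻¹)
      = ↑S⁻¹ * (∑ k, star (M k) * M k) * ↑S⁻¹ := by
        simp only [star_mul, hS.units_inv.star_eq, Finset.mul_sum, Finset.sum_mul, mul_assoc]
    _ = 1 := by rw [← hSP, ← mul_assoc, Units.inv_mul, one_mul, Units.mul_inv]

end Semiring

theorem Matrix.PosSemidef.commute_of_commute_mul_self {n 𝕜 : Type*} [Fintype n] [DecidableEq n]
    [RCLike 𝕜] {S H : Matrix n n 𝕜} (hS : S.PosSemidef) (h : Commute (S * S) H) :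
    Commute S H := by
  rw [← CFC.sqrt_mul_self S hS.nonneg]
  exact h.cfcₙ_nnreal _

theorem stmt_7_general {d K : ℕ}
    (H : Matrix (Fin d) (Fin d) ℂ) (hH : H.IsHermitian)
    (M : Fin K → Matrix (Fin d) (Fin d) ℂ)
    (hComm : ∀ k, M k * H = H * M k) :
    (∑ k, (M k)ᴴ * M k) * H = H * (∑ k, (M k)ᴴ * M k) ∧
    ∀ S : Matrix (Fin d) (Fin d) ℂ, S.PosSemidef → S * S = ∑ k, (M k)ᴴ * M k →
      (S * H = H * S ∧
        (IsUnit (∑ k, (M k)ᴴ * M k) →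
          ∃ (J : ℕ) (C : Fin J → Matrix (Fin d) (Fin d) ℂ),
            (∑ j, (C j)ᴴ * C j = 1) ∧ (∀ j, C j * H = H * C j) ∧
            ∀ ρ : Matrix (Fin d) (Fin d) ℂ,
              ∑ k, M k * ρ * (M k)ᴴ = ∑ j, C j * (S * ρ * S) * (C j)ᴴ)) := by
  have hPH : Commute (∑ k, star (M k) * M k) H := Commute.sum_star_mul_self hH hComm
  refine ⟨hPH, fun S hS hSP => ?_⟩
  have hSH : Commute S H := hS.commute_of_commute_mul_self (hSP ▸ hPH)
  refine ⟨hSH, fun hP => ?_⟩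
  obtain ⟨S, rfl⟩ := isUnit_of_mul_isUnit_left (hSP ▸ hP)
  exact ⟨K, fun k => M k * (↑S⁻¹ : Matrix (Fin d) (Fin d) ℂ),
    sum_star_mul_self_mul_units_inv hS.1 hSP,
    fun k => Commute.mul_left (hComm k) hSH.units_inv_left,
    fun ρ => Finset.sum_congr rfl fun k _ => mul_mul_star_eq_mul_units_inv_conj (M k) ρ hS.1⟩

/-- **Lüders decomposition of an energy-preserving quantum operation.** If all Kraus operators
of `ℳ(ρ) = ∑ k, M k ρ (M k)ᴴ` (with `∑ k, (M k)ᴴ M k ≤ 1`) commute with the Hermitian `H`, then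
`P = ∑ k, (M k)ᴴ M k` and its positive square root `√P` commute with `H`, and when `P` is
invertible there is an energy-preserving quantum channel `𝒞` with `ℳ(ρ) = 𝒞(√P ρ √P)`. -/
theorem stmt_7 {d K : ℕ}
    (H : Matrix (Fin d) (Fin d) ℂ) (hH : H.IsHermitian)
    (M : Fin K → Matrix (Fin d) (Fin d) ℂ)
    (hsub : ((1 : Matrix (Fin d) (Fin d) ℂ) - ∑ k, (M k)ᴴ * M k).PosSemidef)
    (hComm : ∀ k, M k * H = H * M k) :
    (∑ k, (M k)ᴴ * M k) * H = H * (∑ k, (M k)ᴴ * M k) ∧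
    ∀ S : Matrix (Fin d) (Fin d) ℂ, S.PosSemidef → S * S = ∑ k, (M k)ᴴ * M k →
      (S * H = H * S ∧
        (IsUnit (∑ k, (M k)ᴴ * M k) →
          ∃ (J : ℕ) (C : Fin J → Matrix (Fin d) (Fin d) ℂ),
            (∑ j, (C j)ᴴ * C j = 1) ∧ (∀ j, C j * H = H * C j) ∧
            ∀ ρ : Matrix (Fin d) (Fin d) ℂ,
              ∑ k, M k * ρ * (M k)ᴴ = ∑ j, C j * (S * ρ * S) * (C j)ᴴ)) :=
  stmt_7_general H hH M hComm
end

section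
/- Let H be a Hermitian d×d matrix with spectral projections P_E, and let φ, ψ ∈ ℂ^d be unit vectors with p_E = ‖P_E φ‖² and q_E = ‖P_E ψ‖². Then: (i) for every quantum channel ℳ(ρ) = ∑_k M_k ρ M_k† whose Kraus operators all commute with H, the fidelity satisfies ⟨ψ| ℳ(|φ⟩⟨φ|) |ψ⟩ ≤ ( ∑_E √(p_E q_E) )², where the sum runs over the eigenvalues E of H; and (ii) there exists a unitary U commuting with H such that |⟨ψ| U φ⟩|² = ( ∑_E √(p_E q_E) )², so the bound is attained by a unitary energy-preserving channel. -/
open Matrix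
open scoped ComplexOrder

/-- `wt P v = ‖P v‖²`, the weight of the vector `v` on the range of `P`. -/
noncomputable def wt {d : ℕ} (P : Matrix (Fin d) (Fin d) ℂ) (v : Fin d → ℂ) : ℝ :=
  (star (P *ᵥ v) ⬝ᵥ (P *ᵥ v)).re

/-!
Kraus operators commuting with `H` commute with its spectral projections, so
`⟨ψ|M_k φ⟩ = ∑_E ⟨P_E ψ|M_k P_E φ⟩`. For fixed `E`, Cauchy–Schwarz and `∑_k M_k† M_k = 1` bound
the `ℓ²`-norm of `k ↦ ⟨P_E ψ|M_k P_E φ⟩` by `√(p_E q_E)`, and the triangle inequality in `ℓ²`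
gives `∑_k |⟨ψ|M_k φ⟩|² ≤ (∑_E √(p_E q_E))²`.

For equality, a Householder reflection of each eigenspace, corrected by a phase, maps `P_E φ` to
a nonnegative multiple of `P_E ψ`; the direct sum of these blocks is a unitary commuting with `H`.
-/

open WithLp (toLp)

theorem Complex.exists_norm_eq_one_mul_eq_norm (c : ℂ) : ∃ z : ℂ, ‖z‖ = 1 ∧ z * c = ‖c‖ := by
  refine ⟨Complex.exp (↑(-c.arg) * Complex.I), Complex.norm_exp_ofReal_mul_I _, ?_⟩
  conv_lhs => rw [← Complex.norm_mul_exp_arg_mul_I c]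
  rw [mul_left_comm, ← Complex.exp_add]
  push_cast
  simp

namespace Matrix

variable {n κ ι : Type*} [Fintype n] [Fintype κ] [Fintype ι]

theorem star_dotProduct_self_eq_norm_sq (v : n → ℂ) :
    star v ⬝ᵥ v = ((‖toLp 2 v‖ ^ 2 : ℝ) : ℂ) := by
  rw [dotProduct_comm, ← EuclideanSpace.inner_toLp_toLp, inner_self_eq_norm_sq_to_K]
  push_cast
  rfl

theorem norm_star_dotProduct_le (u v : n → ℂ) :
    ‖star u ⬝ᵥ v‖ ≤ ‖toLp 2 u‖ * ‖toLp 2 v‖ := by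
  rw [dotProduct_comm, ← EuclideanSpace.inner_toLp_toLp]
  exact norm_inner_le_norm _ _

theorem star_dotProduct_mulVec_of_isHermitian {A : Matrix n n ℂ} (hA : A.IsHermitian)
    (u v : n → ℂ) : star u ⬝ᵥ (A *ᵥ v) = star (A *ᵥ u) ⬝ᵥ v := by
  rw [dotProduct_mulVec, star_mulVec, hA.eq]

section kraus

theorem star_dotProduct_mul_vecMulVec_mul_conjTranspose_mulVec (M : Matrix n n ℂ)
    (φ ψ : n → ℂ) :
    star ψ ⬝ᵥ ((M * vecMulVec φ (star φ) * Mᴴ) *ᵥ ψ) =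
      ((‖star ψ ⬝ᵥ (M *ᵥ φ)‖ ^ 2 : ℝ) : ℂ) := by
  rw [mul_vecMulVec, vecMulVec_mul, ← star_mulVec, vecMulVec_mulVec, dotProduct_smul,
    op_smul_eq_smul, smul_eq_mul, ← star_star (star (M *ᵥ φ) ⬝ᵥ ψ), ← star_dotProduct]
  push_cast
  exact Complex.conj_mul' _

variable [DecidableEq n] {M : κ → Matrix n n ℂ}

theorem sum_norm_sq_mulVec_of_kraus (hM : ∑ k, (M k)ᴴ * M k = 1) (v : n → ℂ) :
    ∑ k, ‖toLp 2 (M k *ᵥ v)‖ ^ 2 = ‖toLp 2 v‖ ^ 2 := by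
  have h : ∑ k, star (M k *ᵥ v) ⬝ᵥ (M k *ᵥ v) = star v ⬝ᵥ v := by
    simp_rw [star_mulVec, ← dotProduct_mulVec, mulVec_mulVec, ← dotProduct_sum,
      ← sum_mulVec, hM, one_mulVec]
  simp_rw [star_dotProduct_self_eq_norm_sq] at h
  exact_mod_cast h

theorem norm_star_dotProduct_kraus_le (hM : ∑ k, (M k)ᴴ * M k = 1) (u v : n → ℂ) :
    ‖toLp 2 fun k => star u ⬝ᵥ (M k *ᵥ v)‖ ≤ ‖toLp 2 u‖ * ‖toLp 2 v‖ := by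
  refine le_of_sq_le_sq ?_ (by positivity)
  calc ‖toLp 2 fun k => star u ⬝ᵥ (M k *ᵥ v)‖ ^ 2
      = ∑ k, ‖star u ⬝ᵥ (M k *ᵥ v)‖ ^ 2 := EuclideanSpace.norm_sq_eq _
    _ ≤ ∑ k, ‖toLp 2 u‖ ^ 2 * ‖toLp 2 (M k *ᵥ v)‖ ^ 2 := by
      gcongr with k
      rw [← mul_pow]
      exact pow_le_pow_left₀ (norm_nonneg _) (norm_star_dotProduct_le _ _) 2
    _ = (‖toLp 2 u‖ * ‖toLp 2 v‖) ^ 2 := by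
      rw [← Finset.mul_sum, sum_norm_sq_mulVec_of_kraus hM, mul_pow]

end kraus

section spectral

variable {P : ι → Matrix n n ℂ}

theorem mul_proj_eq_smul (hIdem : ∀ i, P i * P i = P i) (hOrth : ∀ i j, i ≠ j → P i * P j = 0)
    {H : Matrix n n ℂ} {E : ι → ℂ} (hSpec : H = ∑ i, E i • P i) (j : ι) :
    H * P j = E j • P j := by
  rw [hSpec, Finset.sum_mul, Finset.sum_eq_single j (fun i _ hij => by
    rw [smul_mul_assoc, hOrth i j hij, smul_zero]) (by simp), smul_mul_assoc, hIdem]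

theorem proj_mul_eq_smul (hIdem : ∀ i, P i * P i = P i) (hOrth : ∀ i j, i ≠ j → P i * P j = 0)
    {H : Matrix n n ℂ} {E : ι → ℂ} (hSpec : H = ∑ i, E i • P i) (j : ι) :
    P j * H = E j • P j := by
  rw [hSpec, Finset.mul_sum, Finset.sum_eq_single j (fun i _ hij => by
    rw [mul_smul_comm, hOrth j i hij.symm, smul_zero]) (by simp), mul_smul_comm, hIdem]

theorem proj_mul_mul_proj_eq_zero (hIdem : ∀ i, P i * P i = P i)
    (hOrth : ∀ i j, i ≠ j → P i * P j = 0) {H : Matrix n n ℂ} {E : ι → ℂ}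
    (hSpec : H = ∑ i, E i • P i) (hE : Function.Injective E) {M : Matrix n n ℂ}
    (hM : Commute M H) {i j : ι} (hij : i ≠ j) : P i * M * P j = 0 := by
  have h : E i • (P i * M * P j) = E j • (P i * M * P j) := by
    calc E i • (P i * M * P j) = P i * H * M * P j := by
          rw [proj_mul_eq_smul hIdem hOrth hSpec, smul_mul_assoc, smul_mul_assoc]
      _ = P i * M * (H * P j) := by simp only [mul_assoc, hM.left_comm]
      _ = E j • (P i * M * P j) := by rw [mul_proj_eq_smul hIdem hOrth hSpec, mul_smul_comm]
  have h' : (E i - E j) • (P i * M * P j) = 0 := by rw [sub_smul, h, sub_self]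
  exact (smul_eq_zero.mp h').resolve_left (sub_ne_zero.mpr (hE.ne hij))

variable [DecidableEq n]

theorem commute_proj_of_commute (hIdem : ∀ i, P i * P i = P i)
    (hOrth : ∀ i j, i ≠ j → P i * P j = 0) (hSum : ∑ i, P i = 1) {H : Matrix n n ℂ}
    {E : ι → ℂ} (hSpec : H = ∑ i, E i • P i) (hE : Function.Injective E) {M : Matrix n n ℂ}
    (hM : Commute M H) (i : ι) : Commute M (P i) := by
  have hzero {j k : ι} (hjk : j ≠ k) := proj_mul_mul_proj_eq_zero hIdem hOrth hSpec hE hM hjk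
  calc M * P i = (∑ j, P j) * M * P i := by rw [hSum, one_mul]
    _ = P i * M * P i := by
      rw [Finset.sum_mul, Finset.sum_mul, Finset.sum_eq_single i (fun j _ => hzero) (by simp)]
    _ = P i * M * ∑ j, P j := by
      rw [Finset.mul_sum, Finset.sum_eq_single i (fun j _ hji => hzero hji.symm) (by simp)]
    _ = P i * M := by rw [hSum, mul_one]

theorem star_dotProduct_mulVec_eq_sum_proj (hHerm : ∀ i, (P i).IsHermitian)
    (hIdem : ∀ i, P i * P i = P i) (hSum : ∑ i, P i = 1) {M : Matrix n n ℂ}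
    (hM : ∀ i, Commute M (P i)) (u v : n → ℂ) :
    star u ⬝ᵥ (M *ᵥ v) = ∑ i, star (P i *ᵥ u) ⬝ᵥ (M *ᵥ (P i *ᵥ v)) := by
  conv_lhs => rw [← one_mulVec (M *ᵥ v), ← hSum, sum_mulVec, dotProduct_sum]
  refine Finset.sum_congr rfl fun i _ => ?_
  have hPM : P i * M = P i * M * P i := by rw [mul_assoc, (hM i).eq, ← mul_assoc, hIdem]
  rw [mulVec_mulVec, hPM, ← mulVec_mulVec, ← mulVec_mulVec,
    star_dotProduct_mulVec_of_isHermitian (hHerm i)]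

theorem sum_norm_sq_le_of_commute_proj (hHerm : ∀ i, (P i).IsHermitian)
    (hIdem : ∀ i, P i * P i = P i) (hSum : ∑ i, P i = 1) {M : κ → Matrix n n ℂ}
    (hKraus : ∑ k, (M k)ᴴ * M k = 1) (hMP : ∀ k i, Commute (M k) (P i)) (φ ψ : n → ℂ) :
    ∑ k, ‖star ψ ⬝ᵥ (M k *ᵥ φ)‖ ^ 2 ≤
      (∑ i, ‖toLp 2 (P i *ᵥ φ)‖ * ‖toLp 2 (P i *ᵥ ψ)‖) ^ 2 := by
  have hsplit : (toLp 2 fun k => star ψ ⬝ᵥ (M k *ᵥ φ) : EuclideanSpace ℂ κ) =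
      ∑ i, toLp 2 fun k => star (P i *ᵥ ψ) ⬝ᵥ (M k *ᵥ (P i *ᵥ φ)) := by
    ext k
    simp [star_dotProduct_mulVec_eq_sum_proj hHerm hIdem hSum (hMP k)]
  rw [← EuclideanSpace.norm_sq_eq (toLp 2 _), hsplit]
  gcongr
  refine (norm_sum_le _ _).trans (Finset.sum_le_sum fun i _ => ?_)
  rw [mul_comm]
  exact norm_star_dotProduct_kraus_le hKraus _ _

end spectral

/-- The reflection of the range of the projection `Q` in the hyperplane `w⊥`. For `w = 0` the
coefficient is `2 / 0 = 0`, so `householder Q 0 = Q`. -/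
noncomputable def householder (Q : Matrix n n ℂ) (w : n → ℂ) : Matrix n n ℂ :=
  Q - ((2 / ‖toLp 2 w‖ ^ 2 : ℝ) : ℂ) • vecMulVec w (star w)

section householder

variable {Q : Matrix n n ℂ} {w : n → ℂ}

theorem householder_isHermitian (hQ : Q.IsHermitian) (w : n → ℂ) :
    (householder Q w).IsHermitian := by
  rw [IsHermitian, householder, conjTranspose_sub, conjTranspose_smul, conjTranspose_vecMulVec,
    star_star, hQ.eq, Complex.star_def, Complex.conj_ofReal]

theorem proj_mul_householder (hQQ : Q * Q = Q) (hw : Q *ᵥ w = w) :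
    Q * householder Q w = householder Q w := by
  rw [householder, mul_sub, hQQ, mul_smul_comm, mul_vecMulVec, hw]

theorem star_vecMul_of_mulVec_eq (hQ : Q.IsHermitian) (hw : Q *ᵥ w = w) :
    star w ᵥ* Q = star w := by
  rw [← hQ.eq, ← star_mulVec, hw]

theorem householder_mul_proj (hQ : Q.IsHermitian) (hQQ : Q * Q = Q) (hw : Q *ᵥ w = w) :
    householder Q w * Q = householder Q w := by
  rw [householder, sub_mul, hQQ, smul_mul_assoc, vecMulVec_mul, star_vecMul_of_mulVec_eq hQ hw]

theorem householder_mul_self (hQ : Q.IsHermitian) (hQQ : Q * Q = Q) (hw : Q *ᵥ w = w) :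
    householder Q w * householder Q w = Q := by
  set r : ℝ := ‖toLp 2 w‖ ^ 2
  have hcoef : (2 / r : ℂ) + 2 / r - 2 / r * (2 / r) * r = 0 := by
    rcases eq_or_ne r 0 with hr | hr
    · simp [hr]
    · field_simp
      ring
  have hQD : Q * vecMulVec w (star w) = vecMulVec w (star w) := by rw [mul_vecMulVec, hw]
  have hDQ : vecMulVec w (star w) * Q = vecMulVec w (star w) := by
    rw [vecMulVec_mul, star_vecMul_of_mulVec_eq hQ hw]
  have hDD : vecMulVec w (star w) * vecMulVec w (star w) = (r : ℂ) • vecMulVec w (star w) := by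
    rw [vecMulVec_mul_vecMulVec, vecMulVec_smul, star_dotProduct_self_eq_norm_sq]
  have hR : householder Q w = Q - (2 / r : ℂ) • vecMulVec w (star w) := by
    simp [householder, r]
  calc householder Q w * householder Q w
      = Q - ((2 / r : ℂ) + 2 / r - 2 / r * (2 / r) * r) • vecMulVec w (star w) := by
        simp only [hR, mul_sub, sub_mul, smul_mul_assoc, mul_smul_comm, hQQ, hQD, hDQ, hDD,
          smul_smul]
        module
    _ = Q := by rw [hcoef, zero_smul, sub_zero]

theorem householder_sub_mulVec {x t : n → ℂ} (hx : Q *ᵥ x = x)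
    (hnorm : ‖toLp 2 x‖ = ‖toLp 2 t‖) (hreal : star x ⬝ᵥ t = star t ⬝ᵥ x) :
    householder Q (x - t) *ᵥ x = t := by
  have hr : ((‖toLp 2 (x - t)‖ ^ 2 : ℝ) : ℂ) = 2 * (star (x - t) ⬝ᵥ x) := by
    rw [← star_dotProduct_self_eq_norm_sq]
    simp only [star_sub, sub_dotProduct, dotProduct_sub, star_dotProduct_self_eq_norm_sq, hnorm,
      hreal]
    ring
  rw [householder, sub_mulVec, hx, smul_mulVec, vecMulVec_mulVec, op_smul_eq_smul, smul_smul]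
  rcases eq_or_ne ‖toLp 2 (x - t)‖ 0 with h0 | h0
  · rw [norm_eq_zero, WithLp.toLp_eq_zero, sub_eq_zero] at h0
    simp [h0]
  · have hne : ((‖toLp 2 (x - t)‖ ^ 2 : ℝ) : ℂ) ≠ 0 := by exact_mod_cast pow_ne_zero 2 h0
    have hcoef : ((2 / ‖toLp 2 (x - t)‖ ^ 2 : ℝ) : ℂ) * (star (x - t) ⬝ᵥ x) = 1 := by
      rw [hr] at hne
      rw [Complex.ofReal_div, Complex.ofReal_ofNat, hr]
      field_simp
      exact div_self (right_ne_zero_of_mul hne)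
    rw [hcoef, one_smul, sub_sub_cancel]

theorem exists_partialIsometry_mulVec_eq (hQ : Q.IsHermitian) (hQQ : Q * Q = Q) {x y : n → ℂ}
    (hx : Q *ᵥ x = x) (hy : Q *ᵥ y = y) (hnorm : ‖toLp 2 x‖ = ‖toLp 2 y‖) :
    ∃ A : Matrix n n ℂ, Aᴴ * A = Q ∧ Q * A = A ∧ A * Q = A ∧ A *ᵥ x = y := by
  -- A reflection sends `x` to `t` only if `⟨x, t⟩` is real: aim at `z • y`, then undo the phase.
  obtain ⟨z, hz, hzc⟩ := Complex.exists_norm_eq_one_mul_eq_norm (star x ⬝ᵥ y)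
  have hzz : z * star z = 1 := by simp [Complex.mul_conj', hz]
  have hw : Q *ᵥ (x - z • y) = x - z • y := by rw [mulVec_sub, mulVec_smul, hx, hy]
  have hxt : star x ⬝ᵥ (z • y) = ‖star x ⬝ᵥ y‖ := by rw [dotProduct_smul, smul_eq_mul, hzc]
  have hreal : star x ⬝ᵥ (z • y) = star (z • y) ⬝ᵥ x := by
    rw [star_dotProduct (z • y), hxt, Complex.star_def, Complex.conj_ofReal]
  have hRx : householder Q (x - z • y) *ᵥ x = z • y := by
    refine householder_sub_mulVec hx ?_ hreal
    rw [WithLp.toLp_smul, norm_smul, hz, one_mul, hnorm]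
  set R := householder Q (x - z • y)
  have hRR : R * R = Q := householder_mul_self hQ hQQ hw
  have hRH : Rᴴ = R := (householder_isHermitian hQ _).eq
  refine ⟨star z • R, ?_, ?_, ?_, ?_⟩
  · rw [conjTranspose_smul, star_star, hRH, smul_mul_smul_comm, hzz, one_smul, hRR]
  · rw [mul_smul_comm, proj_mul_householder hQQ hw]
  · rw [smul_mul_assoc, householder_mul_proj hQ hQQ hw]
  · rw [smul_mulVec, hRx, smul_smul, mul_comm, hzz, one_smul]

theorem exists_partialIsometry_star_dotProduct_eq (hQ : Q.IsHermitian) (hQQ : Q * Q = Q)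
    {x y : n → ℂ} (hx : Q *ᵥ x = x) (hy : Q *ᵥ y = y) :
    ∃ A : Matrix n n ℂ, Aᴴ * A = Q ∧ Q * A = A ∧ A * Q = A ∧
      star y ⬝ᵥ (A *ᵥ x) = ‖toLp 2 x‖ * ‖toLp 2 y‖ := by
  have hnorm : ‖toLp 2 ((‖toLp 2 y‖ : ℂ) • x)‖ = ‖toLp 2 ((‖toLp 2 x‖ : ℂ) • y)‖ := by
    simp only [WithLp.toLp_smul, norm_smul, Complex.norm_real, norm_norm, mul_comm]
  obtain ⟨A, hAA, hQA, hAQ, hAx⟩ := exists_partialIsometry_mulVec_eq hQ hQQ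
    (by rw [mulVec_smul, hx]) (by rw [mulVec_smul, hy]) hnorm
  refine ⟨A, hAA, hQA, hAQ, ?_⟩
  have key : (‖toLp 2 y‖ : ℂ) * (star y ⬝ᵥ (A *ᵥ x)) =
      ‖toLp 2 y‖ * (‖toLp 2 x‖ * ‖toLp 2 y‖) := by
    rw [← smul_eq_mul, ← dotProduct_smul, ← mulVec_smul, hAx, dotProduct_smul,
      star_dotProduct_self_eq_norm_sq, smul_eq_mul]
    push_cast
    ring
  rcases eq_or_ne ‖toLp 2 y‖ 0 with h0 | h0
  · rw [norm_eq_zero, WithLp.toLp_eq_zero] at h0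
    simp [h0]
  · exact mul_left_cancel₀ (by exact_mod_cast h0) key

end householder

section blocks

variable {P A : ι → Matrix n n ℂ}

theorem sum_mul_proj_eq (hOrth : ∀ i j, i ≠ j → P i * P j = 0) (hAP : ∀ i, A i * P i = A i)
    (j : ι) : (∑ i, A i) * P j = A j := by
  rw [Finset.sum_mul, Finset.sum_eq_single j (fun i _ hij => by
    rw [← hAP i, mul_assoc, hOrth i j hij, mul_zero]) (by simp), hAP]

theorem proj_mul_sum_eq (hOrth : ∀ i j, i ≠ j → P i * P j = 0) (hPA : ∀ i, P i * A i = A i)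
    (j : ι) : P j * ∑ i, A i = A j := by
  rw [Finset.mul_sum, Finset.sum_eq_single j (fun i _ hij => by
    rw [← hPA i, ← mul_assoc, hOrth j i hij.symm, zero_mul]) (by simp), hPA]

variable [DecidableEq n]

theorem sum_mem_unitaryGroup (hHerm : ∀ i, (P i).IsHermitian)
    (hOrth : ∀ i j, i ≠ j → P i * P j = 0) (hSum : ∑ i, P i = 1)
    (hAA : ∀ i, (A i)ᴴ * A i = P i) (hPA : ∀ i, P i * A i = A i) (hAP : ∀ i, A i * P i = A i) :
    ∑ i, A i ∈ unitaryGroup n ℂ := by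
  rw [mem_unitaryGroup_iff', star_eq_conjTranspose]
  calc (∑ i, A i)ᴴ * ∑ i, A i = ∑ j, (∑ i, A i)ᴴ * ((∑ i, A i) * P j) := by
        rw [← Finset.mul_sum, ← Finset.mul_sum, hSum, mul_one]
    _ = ∑ j, (P j * ∑ i, A i)ᴴ * A j := by
        simp_rw [sum_mul_proj_eq hOrth hAP, conjTranspose_mul, (hHerm _).eq, mul_assoc, hPA]
    _ = 1 := by simp_rw [proj_mul_sum_eq hOrth hPA, hAA, hSum]

theorem exists_unitary_commute_proj_star_dotProduct_eq (hHerm : ∀ i, (P i).IsHermitian)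
    (hIdem : ∀ i, P i * P i = P i) (hOrth : ∀ i j, i ≠ j → P i * P j = 0) (hSum : ∑ i, P i = 1)
    (φ ψ : n → ℂ) :
    ∃ U ∈ unitaryGroup n ℂ, (∀ i, Commute U (P i)) ∧
      star ψ ⬝ᵥ (U *ᵥ φ) = ((∑ i, ‖toLp 2 (P i *ᵥ φ)‖ * ‖toLp 2 (P i *ᵥ ψ)‖ : ℝ) : ℂ) := by
  have hproj (i : ι) (v : n → ℂ) : P i *ᵥ (P i *ᵥ v) = P i *ᵥ v := by rw [mulVec_mulVec, hIdem]
  choose A hAA hPA hAP hA using fun i =>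
    exists_partialIsometry_star_dotProduct_eq (hHerm i) (hIdem i) (hproj i φ) (hproj i ψ)
  have hcomm (i : ι) : Commute (∑ j, A j) (P i) :=
    (sum_mul_proj_eq hOrth hAP i).trans (proj_mul_sum_eq hOrth hPA i).symm
  refine ⟨∑ i, A i, sum_mem_unitaryGroup hHerm hOrth hSum hAA hPA hAP, hcomm, ?_⟩
  rw [star_dotProduct_mulVec_eq_sum_proj hHerm hIdem hSum hcomm]
  push_cast
  refine Finset.sum_congr rfl fun i _ => ?_
  rw [mulVec_mulVec, sum_mul_proj_eq hOrth hAP, ← hAP i, ← mulVec_mulVec, hA]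

end blocks

end Matrix

theorem wt_eq_norm_sq {d : ℕ} (P : Matrix (Fin d) (Fin d) ℂ) (v : Fin d → ℂ) :
    wt P v = ‖toLp 2 (P *ᵥ v)‖ ^ 2 := by
  rw [wt, star_dotProduct_self_eq_norm_sq, Complex.ofReal_re]

theorem sqrt_wt_mul_wt {d : ℕ} (P : Matrix (Fin d) (Fin d) ℂ) (φ ψ : Fin d → ℂ) :
    √(wt P φ * wt P ψ) = ‖toLp 2 (P *ᵥ φ)‖ * ‖toLp 2 (P *ᵥ ψ)‖ := by
  rw [wt_eq_norm_sq, wt_eq_norm_sq, ← mul_pow, Real.sqrt_sq (by positivity)]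

theorem stmt_8_general {d : ℕ} {ι : Type} [Fintype ι]
    (H : Matrix (Fin d) (Fin d) ℂ)
    (E : ι → ℝ) (hE : Function.Injective E)
    (P : ι → Matrix (Fin d) (Fin d) ℂ)
    (hHerm : ∀ i, (P i).IsHermitian)
    (hIdem : ∀ i, P i * P i = P i)
    (hOrth : ∀ i j, i ≠ j → P i * P j = 0)
    (hSum : ∑ i, P i = 1)
    (hSpec : H = ∑ i, (E i : ℂ) • P i)
    (φ ψ : Fin d → ℂ) :
    (∀ (K : ℕ) (M : Fin K → Matrix (Fin d) (Fin d) ℂ),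
      (∑ k, (M k)ᴴ * M k = 1) → (∀ k, M k * H = H * M k) →
      star ψ ⬝ᵥ ((∑ k, M k * vecMulVec φ (star φ) * (M k)ᴴ) *ᵥ ψ) ≤
        (((∑ i, Real.sqrt (wt (P i) φ * wt (P i) ψ)) ^ 2 : ℝ) : ℂ)) ∧
    (∃ U : Matrix (Fin d) (Fin d) ℂ, Uᴴ * U = 1 ∧ U * Uᴴ = 1 ∧ U * H = H * U ∧
      Complex.normSq (star ψ ⬝ᵥ (U *ᵥ φ)) =
        (∑ i, Real.sqrt (wt (P i) φ * wt (P i) ψ)) ^ 2) := by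
  have hcomm {M : Matrix (Fin d) (Fin d) ℂ} (hM : Commute M H) (i : ι) : Commute M (P i) :=
    commute_proj_of_commute hIdem hOrth hSum hSpec (Complex.ofReal_injective.comp hE) hM i
  simp_rw [sqrt_wt_mul_wt]
  refine ⟨fun K M hKraus hMH => ?_, ?_⟩
  · simp_rw [sum_mulVec, dotProduct_sum, star_dotProduct_mul_vecMulVec_mul_conjTranspose_mulVec]
    exact_mod_cast sum_norm_sq_le_of_commute_proj hHerm hIdem hSum hKraus
      (fun k => hcomm (hMH k)) φ ψ
  · obtain ⟨U, hU, hUP, hUφ⟩ :=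
      exists_unitary_commute_proj_star_dotProduct_eq hHerm hIdem hOrth hSum φ ψ
    refine ⟨U, mem_unitaryGroup_iff'.mp hU, mem_unitaryGroup_iff.mp hU, ?_, ?_⟩
    · rw [hSpec]
      exact Commute.sum_right _ _ _ fun i _ => (hUP i).smul_right _
    · rw [hUφ, Complex.normSq_ofReal, sq]

/-- **Optimality of eigenstate alignment.** Let `H` be Hermitian with spectral projections
`P i`, and let `φ, ψ` be unit vectors with `p_E = ‖P_E φ‖²`, `q_E = ‖P_E ψ‖²`. Then (i) every
channel whose Kraus operators commute with `H` has fidelity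
`⟨ψ|ℳ(|φ⟩⟨φ|)|ψ⟩ ≤ (∑ E √(p_E q_E))²`, and (ii) some unitary `U` commuting with `H` attains
`|⟨ψ|Uφ⟩|² = (∑ E √(p_E q_E))²`. -/
theorem stmt_8 {d : ℕ} {ι : Type} [Fintype ι] [DecidableEq ι]
    (H : Matrix (Fin d) (Fin d) ℂ) (hH : H.IsHermitian)
    (E : ι → ℝ) (hE : Function.Injective E)
    (P : ι → Matrix (Fin d) (Fin d) ℂ)
    (hHerm : ∀ i, (P i).IsHermitian)
    (hIdem : ∀ i, P i * P i = P i)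
    (hOrth : ∀ i j, i ≠ j → P i * P j = 0)
    (hSum : ∑ i, P i = 1)
    (hSpec : H = ∑ i, (E i : ℂ) • P i)
    (φ ψ : Fin d → ℂ) (hφ : star φ ⬝ᵥ φ = 1) (hψ : star ψ ⬝ᵥ ψ = 1) :
    (∀ (K : ℕ) (M : Fin K → Matrix (Fin d) (Fin d) ℂ),
      (∑ k, (M k)ᴴ * M k = 1) → (∀ k, M k * H = H * M k) →
      star ψ ⬝ᵥ ((∑ k, M k * vecMulVec φ (star φ) * (M k)ᴴ) *ᵥ ψ) ≤
        (((∑ i, Real.sqrt (wt (P i) φ * wt (P i) ψ)) ^ 2 : ℝ) : ℂ)) ∧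
    (∃ U : Matrix (Fin d) (Fin d) ℂ, Uᴴ * U = 1 ∧ U * Uᴴ = 1 ∧ U * H = H * U ∧
      Complex.normSq (star ψ ⬝ᵥ (U *ᵥ φ)) =
        (∑ i, Real.sqrt (wt (P i) φ * wt (P i) ψ)) ^ 2) :=
  stmt_8_general H E hE P hHerm hIdem hOrth hSum hSpec φ ψ
end

section
/- Let S be a finite nonempty set and p, q : S → ℝ with p_E > 0, q_E > 0 for all E ∈ S and ∑_{E∈S} p_E = 1. Let r_1 < r_2 < … < r_L be the distinct values of E ↦ p_E/q_E, set r_0 = 0, R_i = {E ∈ S : p_E/q_E = r_i}, U_0 = ∅, and U_k = R_1 ∪ … ∪ R_k. Define p^{(1)} = p and recursively, for i ≥ 1: m_i = min{ p^{(i)}_E / q_E : E ∈ supp p^{(i)} } and p^{(i+1)}_E = ( p^{(i)}_E − m_i q_E ) / ( 1 − m_i ∑_{E' ∈ supp p^{(i)}} q_{E'} ) for E ∈ supp p^{(i)}, with p^{(i+1)}_E = 0 otherwise. Then for every k = 1, …, L: (i) supp p^{(k)} = S ∖ U_{k−1}; (ii) p^{(k)}_E = ( p_E − r_{k−1} q_E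 ) / ( 1 − ∑_{E'∈U_{k−1}} p_{E'} − r_{k−1} ∑_{E'∈S∖U_{k−1}} q_{E'} ) for every E ∈ S ∖ U_{k−1}, the denominator being strictly positive; and (iii) the set of minimizers { E ∈ supp p^{(k)} : p^{(k)}_E/q_E = m_k } equals R_k. -/
open scoped Classical

/-- The minimum (infimum) of the ratios `pp E / q E` over the support of `pp`. -/
noncomputable def minRatio {S : Type*} (q pp : S → ℝ) : ℝ :=
  sInf {x : ℝ | ∃ E, pp E ≠ 0 ∧ x = pp E / q E}

/-- One step of the recursive filtering protocol: subtract `m·q` from the current distribution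
`pp` on its support (where `m` is the minimal ratio `pp/q` on the support) and renormalize. -/
noncomputable def nextDist {S : Type*} [Fintype S] (q pp : S → ℝ) : S → ℝ := fun E =>
  if pp E ≠ 0 then
    (pp E - minRatio q pp * q E) /
      (1 - minRatio q pp * ∑ E' ∈ Finset.univ.filter (fun E' => pp E' ≠ 0), q E')
  else 0

/-- The sequence of energy distributions of the failure branches: `pseq p q 0 = p = p⁽¹⁾` and
`pseq p q i = p⁽ⁱ⁺¹⁾`. -/
noncomputable def pseq {S : Type*} [Fintype S] (p q : S → ℝ) : ℕ → S → ℝ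
  | 0 => p
  | (i + 1) => nextDist q (pseq p q i)

/-!
By induction, `p⁽ᵏ⁾` is the normalized excess `(p - r (k-1) • q) / D` of `p` over `r (k-1) • q`
on `S ∖ U (k-1)`. On the support of such a distribution the ratio `p⁽ᵏ⁾ / q = (p / q - r (k-1)) / D`
is an increasing function of `p / q`, so its minimizers are exactly the next level set `R k`, and
subtracting the minimum times `q` turns the excess over `r (k-1) • q` into the excess over
`r k • q`, which vanishes on `R k`.
-/

open Finset

section ExcessDist

variable {S : Type*} (p q : S → ℝ) (T : Finset S) (a : ℝ)

noncomputable def excessDist : S → ℝ := fun E =>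
  if E ∈ T then (p E - a * q E) / ∑ E' ∈ T, (p E' - a * q E') else 0

variable {p q T a}

lemma sum_excess_pos (hpos : ∀ E ∈ T, a * q E < p E) (hT : T.Nonempty) :
    0 < ∑ E ∈ T, (p E - a * q E) :=
  sum_pos (fun E hE => sub_pos.2 (hpos E hE)) hT

lemma excessDist_ne_zero_iff (hpos : ∀ E ∈ T, a * q E < p E) (hT : T.Nonempty) (E : S) :
    excessDist p q T a E ≠ 0 ↔ E ∈ T := by
  by_cases hE : E ∈ T
  · simp only [excessDist, hE, iff_true, if_true]
    exact (div_pos (sub_pos.2 (hpos E hE)) (sum_excess_pos hpos hT)).ne'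
  · simp [excessDist, hE]

lemma excessDist_div (hq : ∀ E ∈ T, q E ≠ 0) {E : S} (hE : E ∈ T) :
    excessDist p q T a E / q E = (p E / q E - a) / ∑ E' ∈ T, (p E' - a * q E') := by
  have := hq E hE
  rw [excessDist, if_pos hE]
  field_simp

lemma minRatio_excessDist {b : ℝ} (hq : ∀ E ∈ T, q E ≠ 0) (hpos : ∀ E ∈ T, a * q E < p E)
    (hb : IsLeast ((fun E => p E / q E) '' T) b) :
    minRatio q (excessDist p q T a) = (b - a) / ∑ E ∈ T, (p E - a * q E) := by
  have hT : T.Nonempty := coe_nonempty.1 hb.nonempty.of_image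
  have hmono : Monotone fun x => (x - a) / ∑ E ∈ T, (p E - a * q E) := fun x y hxy =>
    div_le_div_of_nonneg_right (sub_le_sub_right hxy a) (sum_excess_pos hpos hT).le
  have hset : {x | ∃ E, excessDist p q T a E ≠ 0 ∧ x = excessDist p q T a E / q E}
      = (fun x => (x - a) / ∑ E ∈ T, (p E - a * q E)) '' ((fun E => p E / q E) '' T) := by
    ext x
    simp only [Set.mem_ofPred_eq, Set.image_image, Set.mem_image, mem_coe,
      excessDist_ne_zero_iff hpos hT]
    constructor <;> rintro ⟨E, hE, rfl⟩ <;> exact ⟨E, hE, (excessDist_div hq hE).symm⟩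
  rw [minRatio, hset]
  exact (hmono.map_isLeast hb).csInf_eq

lemma excessDist_ne_zero_and_div_eq_minRatio_iff {b : ℝ} (hq : ∀ E ∈ T, q E ≠ 0)
    (hpos : ∀ E ∈ T, a * q E < p E) (hb : IsLeast ((fun E => p E / q E) '' T) b) (E : S) :
    (excessDist p q T a E ≠ 0 ∧ excessDist p q T a E / q E = minRatio q (excessDist p q T a))
      ↔ E ∈ T ∧ p E / q E = b := by
  have hT : T.Nonempty := coe_nonempty.1 hb.nonempty.of_image
  have hD := (sum_excess_pos hpos hT).ne'
  rw [excessDist_ne_zero_iff hpos hT, minRatio_excessDist hq hpos hb]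
  refine and_congr_right fun hE => ?_
  rw [excessDist_div hq hE, div_left_inj' hD, sub_left_inj]

lemma nextDist_excessDist [Fintype S] {b : ℝ} (hq : ∀ E ∈ T, q E ≠ 0)
    (hpos : ∀ E ∈ T, a * q E < p E) (hb : IsLeast ((fun E => p E / q E) '' T) b) :
    nextDist q (excessDist p q T a) = excessDist p q (T.filter fun E => p E / q E ≠ b) b := by
  have hT : T.Nonempty := coe_nonempty.1 hb.nonempty.of_image
  have hD := (sum_excess_pos hpos hT).ne'
  have hsupp : univ.filter (fun E => excessDist p q T a E ≠ 0) = T := by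
    ext E
    simp [excessDist_ne_zero_iff hpos hT]
  have hsum : ∑ E ∈ T.filter (fun E => p E / q E ≠ b), (p E - b * q E)
      = ∑ E ∈ T, (p E - a * q E) - (b - a) * ∑ E ∈ T, q E := by
    rw [sum_filter_of_ne fun E hE hne => ?_, mul_sum, ← sum_sub_distrib]
    · exact sum_congr rfl fun E _ => by ring
    · rwa [Ne, div_eq_iff (hq E hE), ← sub_eq_zero]
  ext E
  by_cases hE : E ∈ T
  · have hstep : nextDist q (excessDist p q T a) E
        = (p E - b * q E) / ∑ E ∈ T.filter (fun E => p E / q E ≠ b), (p E - b * q E) := by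
      rw [nextDist, if_pos ((excessDist_ne_zero_iff hpos hT E).2 hE), hsupp,
        minRatio_excessDist hq hpos hb, hsum, excessDist, if_pos hE]
      field_simp
      ring
    rw [hstep, excessDist]
    by_cases hbE : p E / q E = b
    · rw [if_neg (by simp [hbE]), (div_eq_iff (hq E hE)).1 hbE, sub_self, zero_div]
    · rw [if_pos (mem_filter.2 ⟨hE, hbE⟩)]
  · simp [nextDist, excessDist, hE]

end ExcessDist

lemma one_sub_sum_filter_sub_mul_sum_filter_not {S : Type*} [Fintype S] {p : S → ℝ}
    (hsum : ∑ E, p E = 1) (q : S → ℝ) (P : S → Prop) [DecidablePred P] (a : ℝ) :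
    1 - ∑ E ∈ univ.filter P, p E - a * ∑ E ∈ univ.filter (fun E => ¬ P E), q E
      = ∑ E ∈ univ.filter (fun E => ¬ P E), (p E - a * q E) := by
  rw [← hsum, ← sum_filter_add_sum_filter_not univ P, sum_sub_distrib, mul_sum]
  ring

section Levels

variable {S : Type*} [Fintype S] {p q : S → ℝ} {L : ℕ} {r : ℕ → ℝ}

/-- `S ∖ U n` in the paper's notation. -/
noncomputable def survivors (p q : S → ℝ) (r : ℕ → ℝ) (n : ℕ) : Finset S :=
  univ.filter fun E => ¬ ∃ i, 1 ≤ i ∧ i ≤ n ∧ p E / q E = r i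

lemma mem_survivors {n : ℕ} {E : S} :
    E ∈ survivors p q r n ↔ ¬ ∃ i, 1 ≤ i ∧ i ≤ n ∧ p E / q E = r i := by
  simp [survivors]

lemma survivors_zero : survivors p q r 0 = univ := by
  ext E
  simp only [mem_survivors, mem_univ, iff_true]
  omega

lemma survivors_succ (n : ℕ) :
    survivors p q r (n + 1) = (survivors p q r n).filter fun E => p E / q E ≠ r (n + 1) := by
  ext E
  simp only [mem_filter, mem_survivors, Nat.le_succ_iff]
  grind

lemma exists_level_of_mem_survivors (hvals : ∀ E, ∃ i, 1 ≤ i ∧ i ≤ L ∧ p E / q E = r i)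
    {n : ℕ} {E : S} (hE : E ∈ survivors p q r n) : ∃ i, n < i ∧ i ≤ L ∧ p E / q E = r i := by
  obtain ⟨i, hi1, hiL, hEi⟩ := hvals E
  exact ⟨i, not_le.1 fun hin => mem_survivors.1 hE ⟨i, hi1, hin, hEi⟩, hiL, hEi⟩

lemma mem_survivors_of_div_eq (hmono : ∀ i j, i < j → j ≤ L → r i < r j) {n : ℕ}
    (hn : n + 1 ≤ L) {E : S} (hE : p E / q E = r (n + 1)) : E ∈ survivors p q r n := by
  refine mem_survivors.2 ?_
  rintro ⟨i, -, hin, hEi⟩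
  exact (hmono i (n + 1) (by omega) hn).ne (hEi.symm.trans hE)

lemma mul_lt_of_mem_survivors (hq : ∀ E, 0 < q E) (hmono : ∀ i j, i < j → j ≤ L → r i < r j)
    (hvals : ∀ E, ∃ i, 1 ≤ i ∧ i ≤ L ∧ p E / q E = r i) {n : ℕ} :
    ∀ E ∈ survivors p q r n, r n * q E < p E := by
  intro E hE
  obtain ⟨i, hni, hiL, hEi⟩ := exists_level_of_mem_survivors hvals hE
  rw [← lt_div_iff₀ (hq E), hEi]
  exact hmono n i hni hiL

lemma isLeast_div_survivors (hmono : ∀ i j, i < j → j ≤ L → r i < r j)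
    (hvals : ∀ E, ∃ i, 1 ≤ i ∧ i ≤ L ∧ p E / q E = r i)
    (hLvals : ∀ i, 1 ≤ i → i ≤ L → ∃ E, p E / q E = r i) {n : ℕ} (hn : n + 1 ≤ L) :
    IsLeast ((fun E => p E / q E) '' survivors p q r n) (r (n + 1)) := by
  refine ⟨?_, ?_⟩
  · obtain ⟨E, hE⟩ := hLvals (n + 1) (by omega) hn
    exact ⟨E, mem_survivors_of_div_eq hmono hn hE, hE⟩
  · rintro _ ⟨E, hE, rfl⟩
    obtain ⟨i, hni, hiL, hEi⟩ := exists_level_of_mem_survivors hvals hE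
    show r (n + 1) ≤ p E / q E
    rw [hEi]
    rcases (Nat.succ_le_of_lt hni).eq_or_lt with rfl | hlt
    · rfl
    · exact (hmono _ _ hlt hiL).le

lemma pseq_eq_excessDist (hq : ∀ E, 0 < q E) (hsum : ∑ E, p E = 1) (hr0 : r 0 = 0)
    (hmono : ∀ i j, i < j → j ≤ L → r i < r j)
    (hvals : ∀ E, ∃ i, 1 ≤ i ∧ i ≤ L ∧ p E / q E = r i)
    (hLvals : ∀ i, 1 ≤ i → i ≤ L → ∃ E, p E / q E = r i) :
    ∀ n, n + 1 ≤ L → pseq p q n = excessDist p q (survivors p q r n) (r n)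
  | 0, _ => by
    ext E
    simp [pseq, excessDist, survivors_zero, hr0, hsum]
  | n + 1, hn => by
    rw [pseq, pseq_eq_excessDist hq hsum hr0 hmono hvals hLvals n (by omega),
      nextDist_excessDist (fun E _ => (hq E).ne') (mul_lt_of_mem_survivors hq hmono hvals)
        (isLeast_div_survivors hmono hvals hLvals (by omega)), survivors_succ]

end Levels

theorem stmt_12_general {S : Type} [Fintype S]
    (p q : S → ℝ) (hq : ∀ E, 0 < q E)
    (hsum : ∑ E, p E = 1)
    (L : ℕ) (r : ℕ → ℝ) (hr0 : r 0 = 0)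
    (hmono : ∀ i j, i < j → j ≤ L → r i < r j)
    (hvals : ∀ E, ∃ i, 1 ≤ i ∧ i ≤ L ∧ p E / q E = r i)
    (hLvals : ∀ i, 1 ≤ i → i ≤ L → ∃ E, p E / q E = r i) :
    ∀ k, 1 ≤ k → k ≤ L →
      ((∀ E, pseq p q (k - 1) E ≠ 0 ↔ ¬ ∃ i, 1 ≤ i ∧ i ≤ k - 1 ∧ p E / q E = r i) ∧
       (0 < 1 - (∑ E ∈ Finset.univ.filter
              (fun E => ∃ i, 1 ≤ i ∧ i ≤ k - 1 ∧ p E / q E = r i), p E)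
            - r (k - 1) * ∑ E ∈ Finset.univ.filter
              (fun E => ¬ ∃ i, 1 ≤ i ∧ i ≤ k - 1 ∧ p E / q E = r i), q E) ∧
       (∀ E, (¬ ∃ i, 1 ≤ i ∧ i ≤ k - 1 ∧ p E / q E = r i) →
          pseq p q (k - 1) E =
            (p E - r (k - 1) * q E) /
              (1 - (∑ E' ∈ Finset.univ.filter
                  (fun E' => ∃ i, 1 ≤ i ∧ i ≤ k - 1 ∧ p E' / q E' = r i), p E')
                - r (k - 1) * ∑ E' ∈ Finset.univ.filter
                  (fun E' => ¬ ∃ i, 1 ≤ i ∧ i ≤ k - 1 ∧ p E' / q E' = r i), q E')) ∧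
       (∀ E, (pseq p q (k - 1) E ≠ 0 ∧
            pseq p q (k - 1) E / q E = minRatio q (pseq p q (k - 1))) ↔
          p E / q E = r k)) := by
  rintro _ hk hkL
  obtain ⟨n, rfl⟩ := Nat.exists_eq_add_of_le' hk
  rw [Nat.add_sub_cancel, one_sub_sum_filter_sub_mul_sum_filter_not hsum,
    pseq_eq_excessDist hq hsum hr0 hmono hvals hLvals n hkL]
  have hq' : ∀ E ∈ survivors p q r n, q E ≠ 0 := fun E _ => (hq E).ne'
  have hpos := mul_lt_of_mem_survivors hq hmono hvals (n := n)
  have hb := isLeast_div_survivors hmono hvals hLvals hkL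
  have hT : (survivors p q r n).Nonempty := coe_nonempty.1 hb.nonempty.of_image
  refine ⟨fun E => (excessDist_ne_zero_iff hpos hT E).trans mem_survivors,
    sum_excess_pos hpos hT, fun E hE => if_pos (mem_survivors.2 hE), fun E => ?_⟩
  rw [excessDist_ne_zero_and_div_eq_minRatio_iff hq' hpos hb]
  exact and_iff_right_of_imp (mem_survivors_of_div_eq hmono hkL)

/-- **The failure-branch distributions of the optimal recursive protocol.** Let `p, q > 0` on a
finite nonempty `S` with `∑ p = 1`, let `0 = r 0` and `r 1 < … < r L` be the distinct values of
`p/q`, with level sets `R i` and unions `U k = R 1 ∪ … ∪ R k`. Then for every `k = 1, …, L`: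
(i) the support of `p⁽ᵏ⁾` is `S ∖ U (k-1)`; (ii) on that support
`p⁽ᵏ⁾ E = (p E − r (k−1) q E) / (1 − ∑_{U (k−1)} p − r (k−1) ∑_{S∖U (k−1)} q)`, the denominator
being positive; (iii) the minimizers of `p⁽ᵏ⁾/q` on the support are exactly `R k`. -/
theorem stmt_12 {S : Type} [Fintype S] [Nonempty S]
    (p q : S → ℝ) (hp : ∀ E, 0 < p E) (hq : ∀ E, 0 < q E)
    (hsum : ∑ E, p E = 1)
    (L : ℕ) (r : ℕ → ℝ) (hr0 : r 0 = 0)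
    (hmono : ∀ i j, i < j → j ≤ L → r i < r j)
    (hvals : ∀ E, ∃ i, 1 ≤ i ∧ i ≤ L ∧ p E / q E = r i)
    (hLvals : ∀ i, 1 ≤ i → i ≤ L → ∃ E, p E / q E = r i) :
    ∀ k, 1 ≤ k → k ≤ L →
      ((∀ E, pseq p q (k - 1) E ≠ 0 ↔ ¬ ∃ i, 1 ≤ i ∧ i ≤ k - 1 ∧ p E / q E = r i) ∧
       (0 < 1 - (∑ E ∈ Finset.univ.filter
              (fun E => ∃ i, 1 ≤ i ∧ i ≤ k - 1 ∧ p E / q E = r i), p E)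
            - r (k - 1) * ∑ E ∈ Finset.univ.filter
              (fun E => ¬ ∃ i, 1 ≤ i ∧ i ≤ k - 1 ∧ p E / q E = r i), q E) ∧
       (∀ E, (¬ ∃ i, 1 ≤ i ∧ i ≤ k - 1 ∧ p E / q E = r i) →
          pseq p q (k - 1) E =
            (p E - r (k - 1) * q E) /
              (1 - (∑ E' ∈ Finset.univ.filter
                  (fun E' => ∃ i, 1 ≤ i ∧ i ≤ k - 1 ∧ p E' / q E' = r i), p E')
                - r (k - 1) * ∑ E' ∈ Finset.univ.filter
                  (fun E' => ¬ ∃ i, 1 ≤ i ∧ i ≤ k - 1 ∧ p E' / q E' = r i), q E')) ∧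
       (∀ E, (pseq p q (k - 1) E ≠ 0 ∧
            pseq p q (k - 1) E / q E = minRatio q (pseq p q (k - 1))) ↔
          p E / q E = r k)) :=
  stmt_12_general p q hq hsum L r hr0 hmono hvals hLvals
end
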